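/- arXiv:1203.6024 — 9 statements merged into one kernel-verified Lean document; each statement's English description precedes it below -/
import Mathlib

section
/- A nonempty closed subset R of the nonnegative reals satisfies the 4-values condition if and only if the operation ⊕ is associative on R, i.e. (a ⊕ b) ⊕ c = a ⊕ (b ⊕ c) for all a, b, c ∈ R. -/
/-- For `a, b ∈ R`, `a ⊕ b := sup {x ∈ R | x ≤ a + b}`. -/
noncomputable def oplus (R : Set ℝ) (a b : ℝ) : ℝ :=
  sSup {x | x ∈ R ∧ x ≤ a + b}

/-- A triple `(a,b,c)` is metric if each entry is at most the sum of the other two. -/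
def IsMetricTriple (a b c : ℝ) : Prop :=
  a ≤ b + c ∧ b ≤ a + c ∧ c ≤ a + b

/-- The 4-values condition. -/
def FourValues (S : Set ℝ) : Prop :=
  ∀ a ∈ S, ∀ b ∈ S, ∀ c ∈ S, ∀ d ∈ S,
    max b (max c d) ≤ a → a ≤ b + c + d →
      ∀ x ∈ S, IsMetricTriple a b x → IsMetricTriple c d x →
        ∃ y ∈ S, IsMetricTriple a d y ∧ IsMetricTriple c b y

lemma oplus_comm (R : Set ℝ) (a b : ℝ) : oplus R a b = oplus R b a := by
  unfold oplus
  rw [add_comm]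

lemma oplus_mem_le {R : Set ℝ} (hcl : IsClosed R) (hpos : ∀ x ∈ R, 0 ≤ x)
    {a b : ℝ} (ha : a ∈ R) (hb : b ∈ R) :
    oplus R a b ∈ R ∧ oplus R a b ≤ a + b := by
  have hS : IsClosed {x | x ∈ R ∧ x ≤ a + b} := hcl.inter isClosed_Iic
  have hne' : {x | x ∈ R ∧ x ≤ a + b}.Nonempty :=
    ⟨a, ha, le_add_of_nonneg_right (hpos b hb)⟩
  have hbdd : BddAbove {x | x ∈ R ∧ x ≤ a + b} := ⟨a + b, fun x hx => hx.2⟩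
  exact hS.csSup_mem hne' hbdd

lemma le_oplus {R : Set ℝ} {a b z : ℝ} (hz : z ∈ R) (hzab : z ≤ a + b) :
    z ≤ oplus R a b :=
  le_csSup ⟨a + b, fun x hx => hx.2⟩ ⟨hz, hzab⟩

/-- Key half of associativity from the 4-values condition. -/
lemma oplus_assoc_le {R : Set ℝ} (hcl : IsClosed R) (hpos : ∀ x ∈ R, 0 ≤ x)
    (h4 : FourValues R) {a b c : ℝ} (ha : a ∈ R) (hb : b ∈ R) (hc : c ∈ R) :
    oplus R (oplus R a b) c ≤ oplus R a (oplus R b c) := by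
  obtain ⟨hsR, hs_le⟩ := oplus_mem_le hcl hpos ha hb
  set s := oplus R a b with hs_def
  have has : a ≤ s := le_oplus ha (le_add_of_nonneg_right (hpos b hb))
  have hbs : b ≤ s := le_oplus hb (le_add_of_nonneg_left (hpos a ha))
  obtain ⟨huR, hu_le⟩ := oplus_mem_le hcl hpos hsR hc
  set u := oplus R s c with hu_def
  have hsu : s ≤ u := le_oplus hsR (le_add_of_nonneg_right (hpos c hc))
  have hcu : c ≤ u := le_oplus hc (le_add_of_nonneg_left (hpos s hsR))
  have h0s : 0 ≤ s := hpos s hsR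
  have h0a : 0 ≤ a := hpos a ha
  have h0b : 0 ≤ b := hpos b hb
  have h0c : 0 ≤ c := hpos c hc
  -- apply the 4-values condition to (u, c, b, a) with witness x = s
  obtain ⟨y, hyR, hy1, hy2⟩ :=
    h4 u huR c hc b hb a ha
      (max_le hcu (max_le (hbs.trans hsu) (has.trans hsu)))
      (by linarith)
      s hsR
      ⟨by linarith, by linarith, by linarith⟩
      ⟨by linarith, by linarith, by linarith⟩
  -- hy1 : IsMetricTriple u a y, hy2 : IsMetricTriple b c y
  have hyt : y ≤ oplus R b c := le_oplus hyR hy2.2.2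
  exact le_oplus huR (by linarith [hy1.1])

/-- A nonempty closed subset `R` of the nonnegative reals satisfies the 4-values
condition iff `⊕` is associative on `R`. -/
theorem fourValues_iff_oplus_assoc (R : Set ℝ) (hne : R.Nonempty) (hcl : IsClosed R)
    (hpos : ∀ x ∈ R, 0 ≤ x) :
    FourValues R ↔ ∀ a ∈ R, ∀ b ∈ R, ∀ c ∈ R,
      oplus R (oplus R a b) c = oplus R a (oplus R b c) := by
  constructor
  · intro h4 a ha b hb c hc
    refine le_antisymm (oplus_assoc_le hcl hpos h4 ha hb hc) ?_
    have h := oplus_assoc_le hcl hpos h4 hc hb ha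
    calc oplus R a (oplus R b c)
        = oplus R (oplus R c b) a := by rw [oplus_comm R c b, oplus_comm]
      _ ≤ oplus R c (oplus R b a) := h
      _ = oplus R (oplus R a b) c := by rw [oplus_comm R b a, oplus_comm]
  · intro hassoc a ha b hb c hc d hd hmax hsum x hx h1 h2
    have hba : b ≤ a := le_trans (le_max_left _ _) hmax
    have hca : c ≤ a := le_trans ((le_max_left _ _).trans (le_max_right _ _)) hmax
    have hda : d ≤ a := le_trans ((le_max_right _ _).trans (le_max_right _ _)) hmax
    have h0a : 0 ≤ a := hpos a ha
    have h0b : 0 ≤ b := hpos b hb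
    have h0c : 0 ≤ c := hpos c hc
    have h0d : 0 ≤ d := hpos d hd
    obtain ⟨htR, ht_le⟩ := oplus_mem_le hcl hpos hc hb
    set t := oplus R c b with ht_def
    have hct : c ≤ t := le_oplus hc (le_add_of_nonneg_right h0b)
    have hbt : b ≤ t := le_oplus hb (le_add_of_nonneg_left h0c)
    have h0t : 0 ≤ t := hpos t htR
    by_cases hadt : a ≤ d + t
    · by_cases htad : t ≤ a + d
      · exact ⟨t, htR, ⟨hadt, by linarith, htad⟩, ⟨by linarith, by linarith, ht_le⟩⟩
      · push_neg at htad
        obtain ⟨hvR, hv_le⟩ := oplus_mem_le hcl hpos ha hd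
        set v := oplus R a d with hv_def
        have hav : a ≤ v := le_oplus ha (le_add_of_nonneg_right h0d)
        exact ⟨v, hvR, ⟨by linarith, by linarith, hv_le⟩,
          ⟨by linarith, by linarith, by linarith⟩⟩
    · exfalso
      push_neg at hadt
      -- contradiction: a ≤ b ⊕ (c ⊕ d) = (b ⊕ c) ⊕ d ≤ (b ⊕ c) + d = t + d < a
      obtain ⟨hwR, hw_le⟩ := oplus_mem_le hcl hpos hc hd
      set w := oplus R c d with hw_def
      have hxw : x ≤ w := le_oplus hx h2.2.2
      have haw : a ≤ oplus R b w := le_oplus ha (by linarith [h1.1])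
      have hbcR := (oplus_mem_le hcl hpos hb hc).1
      obtain ⟨_, hbcd_le⟩ := oplus_mem_le hcl hpos hbcR hd
      have heq : oplus R (oplus R b c) d = oplus R b w := hassoc b hb c hc d hd
      have htbc : oplus R b c = t := oplus_comm R b c
      rw [← heq, htbc] at haw
      rw [htbc] at hbcd_le
      linarith
end

section
/- Let R be a nonempty closed subset of the nonnegative reals, let a ∈ R and let S be a nonempty subset of R. Then a ⊕ inf(S) = inf{a ⊕ s | s ∈ S}. (Note inf(S) ∈ R since R is closed and bounded below.) -/
/-- For `R` a nonempty closed subset of the nonnegative reals, `a ∈ R` and `S` a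
nonempty subset of `R`, `a ⊕ inf S = inf {a ⊕ s | s ∈ S}`. -/
theorem oplus_sInf (R : Set ℝ) (hne : R.Nonempty) (hcl : IsClosed R)
    (hpos : ∀ x ∈ R, 0 ≤ x) (a : ℝ) (ha : a ∈ R)
    (S : Set ℝ) (hS : S ⊆ R) (hSne : S.Nonempty) :
    oplus R a (sInf S) = sInf {y | ∃ s ∈ S, y = oplus R a s} := by
  set m := sInf S with hm
  have hSbdd : BddBelow S := ⟨0, fun s hs => hpos s (hS hs)⟩
  have hm0 : 0 ≤ m := le_csInf hSne fun s hs => hpos s (hS hs)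
  have hmle : ∀ s ∈ S, m ≤ s := fun s hs => csInf_le hSbdd hs
  -- basic facts about the defining sets
  have hset : ∀ b : ℝ, 0 ≤ b → ({x | x ∈ R ∧ x ≤ a + b} : Set ℝ).Nonempty ∧
      BddAbove {x | x ∈ R ∧ x ≤ a + b} ∧ IsClosed {x | x ∈ R ∧ x ≤ a + b} := by
    intro b hb
    refine ⟨⟨a, ha, by linarith⟩, ⟨a + b, fun x hx => hx.2⟩, ?_⟩
    have : {x | x ∈ R ∧ x ≤ a + b} = R ∩ Set.Iic (a + b) := rfl
    rw [this]; exact hcl.inter isClosed_Iic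
  have hmemR : ∀ b : ℝ, 0 ≤ b → oplus R a b ∈ R ∧ oplus R a b ≤ a + b := by
    intro b hb
    obtain ⟨h1, h2, h3⟩ := hset b hb
    have := h3.csSup_mem h1 h2
    exact ⟨this.1, this.2⟩
  have hmono : ∀ b c : ℝ, 0 ≤ b → b ≤ c → oplus R a b ≤ oplus R a c := by
    intro b c hb hbc
    exact csSup_le_csSup (hset c (le_trans hb hbc)).2.1 (hset b hb).1
      (fun x hx => ⟨hx.1, by linarith [hx.2]⟩)
  set T : Set ℝ := {y | ∃ s ∈ S, y = oplus R a s} with hT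
  have hTne : T.Nonempty := by
    obtain ⟨s, hs⟩ := hSne
    exact ⟨oplus R a s, s, hs, rfl⟩
  have hTsub : T ⊆ R := by
    rintro y ⟨s, hs, rfl⟩
    exact (hmemR s (hpos s (hS hs))).1
  have hTbdd : BddBelow T := ⟨0, fun y hy => hpos y (hTsub hy)⟩
  apply le_antisymm
  · refine le_csInf hTne ?_
    rintro y ⟨s, hs, rfl⟩
    exact hmono m s hm0 (hmle s hs)
  · -- sInf T ∈ R
    have h1 : sInf T ∈ R := by
      have := csInf_mem_closure hTne hTbdd
      exact hcl.closure_subset (closure_mono hTsub this)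
    have h2 : sInf T ≤ a + m := by
      have : ∀ s ∈ S, sInf T - a ≤ s := by
        intro s hs
        have hle : sInf T ≤ oplus R a s := csInf_le hTbdd ⟨s, hs, rfl⟩
        have := (hmemR s (hpos s (hS hs))).2
        linarith
      have := le_csInf hSne this
      linarith
    exact le_csSup (hset m hm0).2.1 ⟨h1, h2⟩
end

section
/- Let R be a nonempty closed subset of the nonnegative reals satisfying the 4-values condition and let M = (M; δ) be a metric space with dist(M) ⊆ R. Then the R-graph (M; [M]², δ) whose underlying graph is the complete graph on M with edge distances given by δ is metric and regular. -/
/-- The `⊕`-sum `a₀ ⊕ (a₁ ⊕ (⋯ ⊕ aₙ))` of a list of reals. -/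
noncomputable def oplusList (R : Set ℝ) : List ℝ → ℝ
  | [] => 0
  | [a] => a
  | a :: b :: l => oplus R a (oplusList R (b :: l))

/-- The `⊕`-length `δ(W)` of a walk `W`. -/
noncomputable def walkDelta (R : Set ℝ) {V : Type} {G : SimpleGraph V} (δ : V → V → ℝ)
    {a b : V} (w : G.Walk a b) : ℝ :=
  oplusList R (w.darts.map fun d => δ d.toProd.1 d.toProd.2)

/-- `d(a,b) = inf {δ(W) | W a walk from a to b}`. -/
noncomputable def gdist (R : Set ℝ) {V : Type} (G : SimpleGraph V) (δ : V → V → ℝ)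
    (a b : V) : ℝ :=
  sInf {x | ∃ w : G.Walk a b, x = walkDelta R δ w}

/-- An `R`-graph: a simple graph together with a symmetric edge-distance function
with values in `R` which is positive on edges. -/
def IsRGraph (R : Set ℝ) {V : Type} (G : SimpleGraph V) (δ : V → V → ℝ) : Prop :=
  ∀ x y : V, G.Adj x y → δ x y ∈ R ∧ 0 < δ x y ∧ δ x y = δ y x

/-- An `R`-graph is regular if `d(a,b) > 0` for all distinct `a`, `b`. -/
def RegularRGraph (R : Set ℝ) {V : Type} (G : SimpleGraph V) (δ : V → V → ℝ) : Prop :=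
  ∀ a b : V, a ≠ b → 0 < gdist R G δ a b

/-- An `R`-graph is metric if `δ(a,b) = d(a,b)` for every edge `{a,b}`. -/
def MetricRGraph (R : Set ℝ) {V : Type} (G : SimpleGraph V) (δ : V → V → ℝ) : Prop :=
  ∀ a b : V, G.Adj a b → δ a b = gdist R G δ a b


/-- If `M` is a metric space with all distances in `R`, then the `R`-graph on `M`
whose underlying graph is the complete graph and whose edge distances are given by
the metric is metric and regular. -/
theorem completeGraph_metric_regular (R : Set ℝ) (hne : R.Nonempty)
    (hcl : IsClosed R) (hpos : ∀ x ∈ R, 0 ≤ x) (h4 : FourValues R)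
    (M : Type) [MetricSpace M] (hd : ∀ x y : M, dist x y ∈ R) :
    MetricRGraph R (⊤ : SimpleGraph M) (fun x y => dist x y) ∧
      RegularRGraph R (⊤ : SimpleGraph M) (fun x y => dist x y) := by
  have key : ∀ a b : M, ∀ w : (⊤ : SimpleGraph M).Walk a b,
      dist a b ≤ walkDelta R (fun x y => dist x y) w := by
    intro a b w
    induction w with
    | nil => simp [walkDelta, oplusList]
    | @cons a c b h p ih =>
      cases p with
      | nil => simp [walkDelta, oplusList]
      | cons h' p' =>
        have hle : dist a b ≤ dist a c + walkDelta R (fun x y => dist x y) (.cons h' p') :=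
          le_trans (dist_triangle a c b) (by linarith [ih])
        have hmem : dist a b ∈ {x | x ∈ R ∧
            x ≤ dist a c + walkDelta R (fun x y => dist x y) (.cons h' p')} :=
          ⟨hd a b, hle⟩
        have hbdd : BddAbove {x | x ∈ R ∧
            x ≤ dist a c + walkDelta R (fun x y => dist x y) (.cons h' p')} :=
          ⟨_, fun x hx => hx.2⟩
        have := le_csSup hbdd hmem
        simpa [walkDelta, oplusList, oplus] using this
  have hgd : ∀ a b : M, gdist R (⊤ : SimpleGraph M) (fun x y => dist x y) a b = dist a b := by
    intro a b
    apply le_antisymm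
    · by_cases hab : a = b
      · subst hab
        have : (0 : ℝ) ∈ {x | ∃ w : (⊤ : SimpleGraph M).Walk a a,
            x = walkDelta R (fun x y => dist x y) w} := ⟨.nil, by simp [walkDelta, oplusList]⟩
        simpa [gdist] using csInf_le ⟨dist a a, fun x hx => by obtain ⟨w, hw⟩ := hx; exact hw ▸ key a a w⟩ this
      · have hadj : (⊤ : SimpleGraph M).Adj a b := hab
        have : dist a b ∈ {x | ∃ w : (⊤ : SimpleGraph M).Walk a b,
            x = walkDelta R (fun x y => dist x y) w} :=
          ⟨.cons hadj .nil, by simp [walkDelta, oplusList]⟩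
        exact csInf_le ⟨dist a b, fun x hx => by obtain ⟨w, hw⟩ := hx; exact hw ▸ key a b w⟩ this
    · have hnonempty : {x | ∃ w : (⊤ : SimpleGraph M).Walk a b,
          x = walkDelta R (fun x y => dist x y) w}.Nonempty := by
        by_cases hab : a = b
        · subst hab; exact ⟨_, .nil, rfl⟩
        · exact ⟨_, .cons (show (⊤ : SimpleGraph M).Adj a b from hab) .nil, rfl⟩
      exact le_csInf hnonempty (fun x hx => by obtain ⟨w, hw⟩ := hx; exact hw ▸ key a b w)
  constructor
  · intro a b _
    exact (hgd a b).symm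
  · intro a b hab
    rw [hgd a b]
    exact dist_pos.mpr hab
end

section
/- Let R be a nonempty closed subset of the nonnegative reals satisfying the 4-values condition, let r ∈ R with r > 0, and let U = (U; δ^U) and V = (V; δ^V) be two disjoint countable metric spaces with dist(U) ∪ dist(V) ⊆ R. Let (u_i; i ∈ ω) be an enumeration of U, let I ⊆ ω and let V = {v_i | i ∈ I} be an indexing of V such that |δ^U(u_i,u_j) − δ^V(v_i,v_j)| ≤ r for all i, j ∈ I. Then there exists a metric space W = (W; δ^W) with dist(W) ⊆ R, with W = {w_i | i ∈ ω} disjoint from U, with w_i = v_i for all i ∈ I and δ^W agreeing with δ^V on V, such that |δ^U(u_i,u_j) − δ^W(w_i,w_j)| ≤ r for all i, j ∈ ω. -/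
/-- `a ⊕ b` : the largest element of `R` that is `≤ a + b`. -/
noncomputable def emcOp (R : Set ℝ) (a b : ℝ) : ℝ := sSup (R ∩ Set.Icc 0 (a + b))

lemma emcOp_set_nonempty {R : Set ℝ} (h0R : (0:ℝ) ∈ R) {a b : ℝ} (ha : 0 ≤ a) (hb : 0 ≤ b) :
    (R ∩ Set.Icc 0 (a + b)).Nonempty := ⟨0, h0R, le_refl 0, by linarith⟩

lemma emcOp_set_bdd {R : Set ℝ} {a b : ℝ} : BddAbove (R ∩ Set.Icc 0 (a + b)) :=
  ⟨a + b, fun _ hx => hx.2.2⟩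

lemma emcOp_le_add {R : Set ℝ} (h0R : (0:ℝ) ∈ R) {a b : ℝ} (ha : 0 ≤ a) (hb : 0 ≤ b) :
    emcOp R a b ≤ a + b :=
  csSup_le (emcOp_set_nonempty h0R ha hb) (fun _ hx => hx.2.2)

lemma le_emcOp {R : Set ℝ} {z a b : ℝ} (hz : z ∈ R) (hz0 : 0 ≤ z) (h : z ≤ a + b) :
    z ≤ emcOp R a b :=
  le_csSup emcOp_set_bdd ⟨hz, hz0, h⟩

lemma emcOp_mem {R : Set ℝ} (hcl : IsClosed R) (h0R : (0:ℝ) ∈ R) {a b : ℝ}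
    (ha : 0 ≤ a) (hb : 0 ≤ b) : emcOp R a b ∈ R :=
  ((hcl.inter isClosed_Icc).csSup_mem (emcOp_set_nonempty h0R ha hb) emcOp_set_bdd).1

lemma emcOp_nonneg {R : Set ℝ} (h0R : (0:ℝ) ∈ R) {a b : ℝ} (ha : 0 ≤ a) (hb : 0 ≤ b) :
    0 ≤ emcOp R a b :=
  le_csSup emcOp_set_bdd ⟨h0R, le_refl 0, by linarith⟩

lemma emcOp_comm (R : Set ℝ) (a b : ℝ) : emcOp R a b = emcOp R b a := by
  unfold emcOp; rw [add_comm]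

lemma emcOp_mono_right {R : Set ℝ} (h0R : (0:ℝ) ∈ R) {a b b' : ℝ}
    (ha : 0 ≤ a) (hb : 0 ≤ b) (h : b ≤ b') : emcOp R a b ≤ emcOp R a b' :=
  csSup_le_csSup emcOp_set_bdd (emcOp_set_nonempty h0R ha hb)
    (fun x hx => ⟨hx.1, hx.2.1, le_trans hx.2.2 (by linarith)⟩)

lemma emcOp_mono_left {R : Set ℝ} (h0R : (0:ℝ) ∈ R) {a a' b : ℝ}
    (ha : 0 ≤ a) (hb : 0 ≤ b) (h : a ≤ a') : emcOp R a b ≤ emcOp R a' b := by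
  rw [emcOp_comm R a b, emcOp_comm R a' b]
  exact emcOp_mono_right h0R hb ha h

lemma le_emcOp_left {R : Set ℝ} {a b : ℝ} (ha : a ∈ R) (ha0 : 0 ≤ a) (hb : 0 ≤ b) :
    a ≤ emcOp R a b := le_emcOp ha ha0 (by linarith)

lemma emcOp_zero {R : Set ℝ} {a : ℝ} (ha : a ∈ R) (ha0 : 0 ≤ a) : emcOp R a 0 = a := by
  apply le_antisymm
  · apply csSup_le
    · exact ⟨a, ha, ha0, by linarith⟩
    · intro x hx
      simpa using hx.2.2
  · exact le_emcOp ha ha0 (by linarith)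
section assoc
variable {R : Set ℝ}

lemma emcOp_assoc_le (hcl : IsClosed R) (hpos : ∀ x ∈ R, 0 ≤ x) (h0R : (0:ℝ) ∈ R)
    (h4 : FourValues R) {a b c : ℝ} (ha : a ∈ R) (hb : b ∈ R) (hc : c ∈ R) :
    emcOp R a (emcOp R b c) ≤ emcOp R (emcOp R a b) c := by
  have ha0 := hpos a ha; have hb0 := hpos b hb; have hc0 := hpos c hc
  set x := emcOp R b c with hxdef
  have hxR : x ∈ R := emcOp_mem hcl h0R hb0 hc0
  have hx0 : 0 ≤ x := hpos x hxR
  have hxle : x ≤ b + c := emcOp_le_add h0R hb0 hc0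
  have hbx : b ≤ x := le_emcOp_left hb hb0 hc0
  have hcx : c ≤ x := by rw [hxdef, emcOp_comm]; exact le_emcOp_left hc hc0 hb0
  set t := emcOp R a x with htdef
  have htR : t ∈ R := emcOp_mem hcl h0R ha0 hx0
  have ht0 : 0 ≤ t := hpos t htR
  have htle : t ≤ a + x := emcOp_le_add h0R ha0 hx0
  have hat : a ≤ t := le_emcOp_left ha ha0 hx0
  have hxt : x ≤ t := by rw [htdef, emcOp_comm]; exact le_emcOp_left hxR hx0 ha0
  obtain ⟨y, hyR, hy1, hy2⟩ :=
    h4 t htR a ha b hb c hc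
      (by
        apply max_le hat
        exact max_le (le_trans hbx hxt) (le_trans hcx hxt))
      (by linarith)
      x hxR
      ⟨by linarith, by linarith, by linarith⟩
      ⟨by linarith, by linarith, by linarith⟩
  have hyab : y ≤ emcOp R a b := le_emcOp hyR (hpos y hyR) (by have := hy2.2.2; linarith)
  have : t ≤ emcOp R a b + c := by have := hy1.1; linarith
  exact le_emcOp htR ht0 this

lemma emcOp_assoc (hcl : IsClosed R) (hpos : ∀ x ∈ R, 0 ≤ x) (h0R : (0:ℝ) ∈ R)
    (h4 : FourValues R) {a b c : ℝ} (ha : a ∈ R) (hb : b ∈ R) (hc : c ∈ R) :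
    emcOp R (emcOp R a b) c = emcOp R a (emcOp R b c) := by
  apply le_antisymm
  · calc emcOp R (emcOp R a b) c = emcOp R c (emcOp R b a) := by
          rw [emcOp_comm R a b, emcOp_comm]
    _ ≤ emcOp R (emcOp R c b) a := emcOp_assoc_le hcl hpos h0R h4 hc hb ha
    _ = emcOp R a (emcOp R b c) := by rw [emcOp_comm R c b, emcOp_comm R b c, emcOp_comm]
  · exact emcOp_assoc_le hcl hpos h0R h4 ha hb hc
end assoc

section identities
variable {R : Set ℝ} (hcl : IsClosed R) (hpos : ∀ x ∈ R, 0 ≤ x) (h0R : (0:ℝ) ∈ R)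
    (h4 : FourValues R)

include hcl hpos h0R h4

/-- `a⊕((b⊕c)⊕e) = ((a⊕c)⊕e)⊕b` -/
lemma emcI1 {a b c e : ℝ} (ha : a ∈ R) (hb : b ∈ R) (hc : c ∈ R) (he : e ∈ R) :
    emcOp R a (emcOp R (emcOp R b c) e) = emcOp R (emcOp R (emcOp R a c) e) b := by
  have hbc : emcOp R b c ∈ R := emcOp_mem hcl h0R (hpos b hb) (hpos c hc)
  have hac : emcOp R a c ∈ R := emcOp_mem hcl h0R (hpos a ha) (hpos c hc)
  have hcb : emcOp R c b ∈ R := emcOp_mem hcl h0R (hpos c hc) (hpos b hb)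
  calc emcOp R a (emcOp R (emcOp R b c) e)
      = emcOp R a (emcOp R (emcOp R c b) e) := by rw [emcOp_comm R b c]
    _ = emcOp R a (emcOp R c (emcOp R b e)) := by rw [emcOp_assoc hcl hpos h0R h4 hc hb he]
    _ = emcOp R (emcOp R a c) (emcOp R b e) := by
        rw [emcOp_assoc hcl hpos h0R h4 ha hc (emcOp_mem hcl h0R (hpos b hb) (hpos e he))]
    _ = emcOp R (emcOp R a c) (emcOp R e b) := by rw [emcOp_comm R b e]
    _ = emcOp R (emcOp R (emcOp R a c) e) b := by
        rw [emcOp_assoc hcl hpos h0R h4 hac he hb]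

/-- `a⊕((b⊕c)⊕e) = (a⊕b)⊕(c⊕e)` -/
lemma emcI2 {a b c e : ℝ} (ha : a ∈ R) (hb : b ∈ R) (hc : c ∈ R) (he : e ∈ R) :
    emcOp R a (emcOp R (emcOp R b c) e) = emcOp R (emcOp R a b) (emcOp R c e) := by
  rw [emcOp_assoc hcl hpos h0R h4 hb hc he,
    ← emcOp_assoc hcl hpos h0R h4 ha hb (emcOp_mem hcl h0R (hpos c hc) (hpos e he))]

/-- `a⊕(b⊕X) = (b⊕a)⊕X` -/
lemma emcJ1 {a b X : ℝ} (ha : a ∈ R) (hb : b ∈ R) (hX : X ∈ R) :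
    emcOp R a (emcOp R b X) = emcOp R (emcOp R b a) X := by
  rw [← emcOp_assoc hcl hpos h0R h4 ha hb hX, emcOp_comm R a b]

/-- `a⊕(b⊕(c⊕e)) = ((b⊕a)⊕e)⊕c` -/
lemma emcI3 {a b c e : ℝ} (ha : a ∈ R) (hb : b ∈ R) (hc : c ∈ R) (he : e ∈ R) :
    emcOp R a (emcOp R b (emcOp R c e)) = emcOp R (emcOp R (emcOp R b a) e) c := by
  have hba : emcOp R b a ∈ R := emcOp_mem hcl h0R (hpos b hb) (hpos a ha)
  calc emcOp R a (emcOp R b (emcOp R c e))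
      = emcOp R (emcOp R b a) (emcOp R c e) := emcJ1 hcl hpos h0R h4 ha hb
        (emcOp_mem hcl h0R (hpos c hc) (hpos e he))
    _ = emcOp R (emcOp R b a) (emcOp R e c) := by rw [emcOp_comm R c e]
    _ = emcOp R (emcOp R (emcOp R b a) e) c := by
        rw [emcOp_assoc hcl hpos h0R h4 hba he hc]

/-- `(a⊕(b⊕c))⊕e = ((a⊕c)⊕e)⊕b` -/
lemma emcI6 {a b c e : ℝ} (ha : a ∈ R) (hb : b ∈ R) (hc : c ∈ R) (he : e ∈ R) :
    emcOp R (emcOp R a (emcOp R b c)) e = emcOp R (emcOp R (emcOp R a c) e) b := by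
  have hac : emcOp R a c ∈ R := emcOp_mem hcl h0R (hpos a ha) (hpos c hc)
  calc emcOp R (emcOp R a (emcOp R b c)) e
      = emcOp R (emcOp R a (emcOp R c b)) e := by rw [emcOp_comm R b c]
    _ = emcOp R (emcOp R (emcOp R a c) b) e := by
        rw [emcOp_assoc hcl hpos h0R h4 ha hc hb]
    _ = emcOp R (emcOp R a c) (emcOp R b e) := by
        rw [emcOp_assoc hcl hpos h0R h4 hac hb he]
    _ = emcOp R (emcOp R a c) (emcOp R e b) := by rw [emcOp_comm R b e]
    _ = emcOp R (emcOp R (emcOp R a c) e) b := by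
        rw [emcOp_assoc hcl hpos h0R h4 hac he hb]

/-- `(a⊕b)⊕c = (b⊕c)⊕a` -/
lemma emcI7 {a b c : ℝ} (ha : a ∈ R) (hb : b ∈ R) (hc : c ∈ R) :
    emcOp R (emcOp R a b) c = emcOp R (emcOp R b c) a := by
  rw [emcOp_assoc hcl hpos h0R h4 ha hb hc, emcOp_comm R a (emcOp R b c)]

/-- `(a⊕(b⊕e))⊕c = ((b⊕c)⊕e)⊕a` -/
lemma emcI8 {a b c e : ℝ} (ha : a ∈ R) (hb : b ∈ R) (hc : c ∈ R) (he : e ∈ R) :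
    emcOp R (emcOp R a (emcOp R b e)) c = emcOp R (emcOp R (emcOp R b c) e) a := by
  have hbe : emcOp R b e ∈ R := emcOp_mem hcl h0R (hpos b hb) (hpos e he)
  calc emcOp R (emcOp R a (emcOp R b e)) c
      = emcOp R a (emcOp R (emcOp R b e) c) := by
        rw [emcOp_assoc hcl hpos h0R h4 ha hbe hc]
    _ = emcOp R a (emcOp R (emcOp R b c) e) := by
        rw [emcOp_assoc hcl hpos h0R h4 hb he hc,
          emcOp_assoc hcl hpos h0R h4 hb hc he, emcOp_comm R e c]
    _ = emcOp R (emcOp R (emcOp R b c) e) a := emcOp_comm R _ _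

end identities

/-- The new distance from the new point to `m`: infimum of the `⊕`-upper bounds. -/
noncomputable def emcRow (R : Set ℝ) (r : ℝ) (S : Set ℕ) (d : ℕ → ℕ → ℝ) (t : ℕ → ℝ) :
    ℕ → ℝ
  | m => sInf ({z : ℝ | ∃ j, ∃ _h : j < m ∧ j ∈ S,
                  z = emcOp R (emcRow R r S d t j) (d j m)} ∪
               {z : ℝ | ∃ p, ∃ _h : p ∈ S, z = emcOp R (emcOp R (t p) (d m p)) r})
  termination_by m => m
  decreasing_by exact _h.1

section inner
variable {R : Set ℝ} (hcl : IsClosed R) (hpos : ∀ x ∈ R, 0 ≤ x) (h0R : (0:ℝ) ∈ R)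
    (h4 : FourValues R) {r : ℝ} (hrR : r ∈ R) (hr0 : 0 ≤ r)
    {S : Set ℕ} {d : ℕ → ℕ → ℝ} {t : ℕ → ℝ}
    (hdR : ∀ p ∈ S, ∀ q ∈ S, d p q ∈ R)
    (hd0 : ∀ p, d p p = 0)
    (hdsym : ∀ p q, d p q = d q p)
    (hdtri : ∀ p ∈ S, ∀ q ∈ S, ∀ s ∈ S, d p q ≤ d p s + d s q)
    (htR : ∀ p ∈ S, t p ∈ R)
    (H6 : ∀ p ∈ S, ∀ q ∈ S, t p ≤ emcOp R (t q) (emcOp R (d p q) r))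
    (H8 : ∀ p ∈ S, ∀ q ∈ S, d p q ≤ emcOp R (emcOp R (t p) (t q)) r)

include hcl hpos h0R h4 hrR hr0 hdR hd0 hdsym hdtri htR H6 H8

lemma emcRow_inv (m : ℕ) :
    m ∈ S →
      (emcRow R r S d t m ∈ R) ∧ (r ≤ emcRow R r S d t m) ∧
      (∀ p ∈ S, emcRow R r S d t m ≤ emcOp R (emcOp R (t p) (d m p)) r) ∧
      (∀ j, j < m → j ∈ S → emcRow R r S d t m ≤ emcOp R (emcRow R r S d t j) (d j m)) ∧
      (∀ p ∈ S, t p ≤ emcOp R (emcRow R r S d t m) (emcOp R (d m p) r)) ∧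
      (∀ p ∈ S, d m p ≤ emcOp R (emcRow R r S d t m) (emcOp R (t p) r)) ∧
      (∀ j, j < m → j ∈ S → emcRow R r S d t j ≤ emcOp R (emcRow R r S d t m) (d j m)) ∧
      (∀ j, j < m → j ∈ S → d j m ≤ emcOp R (emcRow R r S d t m) (emcRow R r S d t j)) := by
  induction m using Nat.strong_induction_on with
  | _ m IH =>
  intro hmS
  set f := emcRow R r S d t with hfdef
  set E : Set ℝ := ({z : ℝ | ∃ j, ∃ _h : j < m ∧ j ∈ S, z = emcOp R (f j) (d j m)} ∪
               {z : ℝ | ∃ p, ∃ _h : p ∈ S, z = emcOp R (emcOp R (t p) (d m p)) r}) with hEdef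
  have hfm_eq : f m = sInf E := by rw [hfdef]; rw [emcRow]
  -- basic nonnegativity helpers
  have hd0' : ∀ {p q : ℕ}, p ∈ S → q ∈ S → 0 ≤ d p q := fun hp hq => hpos _ (hdR _ hp _ hq)
  have ht0' : ∀ {p : ℕ}, p ∈ S → 0 ≤ t p := fun hp => hpos _ (htR _ hp)
  -- every element of E is in R and is at least r
  have hzR : ∀ z ∈ E, z ∈ R ∧ r ≤ z := by
    rintro z (⟨j, ⟨hjm, hjS⟩, rfl⟩ | ⟨p, hpS, rfl⟩)
    · obtain ⟨hfjR, hfjr, -⟩ := IH j hjm hjS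
      have hfj0 : 0 ≤ f j := hpos _ hfjR
      constructor
      · exact emcOp_mem hcl h0R hfj0 (hd0' hjS hmS)
      · exact le_trans hfjr (le_emcOp_left hfjR hfj0 (hd0' hjS hmS))
    · have h1 : emcOp R (t p) (d m p) ∈ R := emcOp_mem hcl h0R (ht0' hpS) (hd0' hmS hpS)
      have h10 : 0 ≤ emcOp R (t p) (d m p) := hpos _ h1
      constructor
      · exact emcOp_mem hcl h0R h10 hr0
      · exact le_emcOp hrR hr0 (by linarith)
  have hEsub : E ⊆ R := fun z hz => (hzR z hz).1
  have hEne : E.Nonempty := ⟨emcOp R (emcOp R (t m) (d m m)) r, Or.inr ⟨m, hmS, rfl⟩⟩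
  have hbdd : BddBelow E := ⟨r, fun z hz => (hzR z hz).2⟩
  have P1 : f m ∈ R := by
    rw [hfm_eq]
    exact closure_minimal hEsub hcl (csInf_mem_closure hEne hbdd)
  have P2 : r ≤ f m := by
    rw [hfm_eq]; exact le_csInf hEne (fun z hz => (hzR z hz).2)
  have hf0 : 0 ≤ f m := hpos _ P1
  have P3 : ∀ p ∈ S, f m ≤ emcOp R (emcOp R (t p) (d m p)) r := by
    intro p hpS
    rw [hfm_eq]; exact csInf_le hbdd (Or.inr ⟨p, hpS, rfl⟩)
  have P4 : ∀ j, j < m → j ∈ S → f m ≤ emcOp R (f j) (d j m) := by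
    intro j hjm hjS
    rw [hfm_eq]; exact csInf_le hbdd (Or.inl ⟨j, ⟨hjm, hjS⟩, rfl⟩)
  -- the mechanism: to show `A ≤ f m ⊕ C` it is enough to bound `A ≤ z + C` for all upper
  -- bounds `z ∈ E`.
  have key : ∀ {A C : ℝ}, A ∈ R → 0 ≤ C → (∀ z ∈ E, A ≤ z + C) → A ≤ emcOp R (f m) C := by
    intro A C hA hC hall
    have h1 : A - C ≤ sInf E := le_csInf hEne (fun z hz => by linarith [hall z hz])
    exact le_emcOp hA (hpos A hA) (by rw [hfm_eq] at *; linarith)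

  have P5 : ∀ p ∈ S, t p ≤ emcOp R (f m) (emcOp R (d m p) r) := by
    intro p hpS
    have hC0 : 0 ≤ emcOp R (d m p) r := emcOp_nonneg h0R (hd0' hmS hpS) hr0
    apply key (htR p hpS) hC0
    rintro z (⟨j, ⟨hjm, hjS⟩, rfl⟩ | ⟨q, hqS, rfl⟩)
    · obtain ⟨hfjR, -, -, -, IHP5, -, -, -⟩ := IH j hjm hjS
      have hfj0 : 0 ≤ f j := hpos _ hfjR
      have step2 : d j p ≤ emcOp R (d j m) (d m p) :=
        le_emcOp (hdR j hjS p hpS) (hd0' hjS hpS) (hdtri j hjS p hpS m hmS)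
      have chain : t p ≤ emcOp R (f j) (emcOp R (emcOp R (d j m) (d m p)) r) :=
        le_trans (IHP5 p hpS)
          (emcOp_mono_right h0R hfj0 (emcOp_nonneg h0R (hd0' hjS hpS) hr0)
            (emcOp_mono_left h0R (hd0' hjS hpS) hr0 step2))
      rw [emcI2 hcl hpos h0R h4 hfjR (hdR j hjS m hmS) (hdR m hmS p hpS) hrR] at chain
      have step5 := emcOp_le_add h0R (emcOp_nonneg h0R hfj0 (hd0' hjS hmS)) hC0
        (R := R) (a := emcOp R (f j) (d j m)) (b := emcOp R (d m p) r)
      linarith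
    · have step2 : d p q ≤ emcOp R (d m p) (d m q) :=
        le_emcOp (hdR p hpS q hqS) (hd0' hpS hqS) (by
          have h1 := hdtri p hpS q hqS m hmS
          have h2 := hdsym p m; linarith)
      have chain : t p ≤ emcOp R (t q) (emcOp R (emcOp R (d m p) (d m q)) r) :=
        le_trans (H6 p hpS q hqS)
          (emcOp_mono_right h0R (ht0' hqS) (emcOp_nonneg h0R (hd0' hpS hqS) hr0)
            (emcOp_mono_left h0R (hd0' hpS hqS) hr0 step2))
      rw [emcI1 hcl hpos h0R h4 (htR q hqS) (hdR m hmS p hpS) (hdR m hmS q hqS) hrR] at chain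
      have step5 := emcOp_le_add h0R
        (emcOp_nonneg h0R (emcOp_nonneg h0R (ht0' hqS) (hd0' hmS hqS)) hr0) (hd0' hmS hpS)
        (R := R) (a := emcOp R (emcOp R (t q) (d m q)) r) (b := d m p)
      have step6 : d m p ≤ emcOp R (d m p) r :=
        le_emcOp_left (hdR m hmS p hpS) (hd0' hmS hpS) hr0
      linarith
  have P6 : ∀ p ∈ S, d m p ≤ emcOp R (f m) (emcOp R (t p) r) := by
    intro p hpS
    have hC0 : 0 ≤ emcOp R (t p) r := emcOp_nonneg h0R (ht0' hpS) hr0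
    apply key (hdR m hmS p hpS) hC0
    rintro z (⟨j, ⟨hjm, hjS⟩, rfl⟩ | ⟨q, hqS, rfl⟩)
    · obtain ⟨hfjR, -, -, -, -, IHP6, -, -⟩ := IH j hjm hjS
      have hfj0 : 0 ≤ f j := hpos _ hfjR
      have step1 : d m p ≤ emcOp R (d j m) (d j p) :=
        le_emcOp (hdR m hmS p hpS) (hd0' hmS hpS) (by
          have h1 := hdtri m hmS p hpS j hjS
          have h2 := hdsym m j; linarith)
      have chain : d m p ≤ emcOp R (d j m) (emcOp R (f j) (emcOp R (t p) r)) :=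
        le_trans step1
          (emcOp_mono_right h0R (hd0' hjS hmS) (hd0' hjS hpS) (IHP6 p hpS))
      rw [emcJ1 hcl hpos h0R h4 (hdR j hjS m hmS) hfjR
        (emcOp_mem hcl h0R (ht0' hpS) hr0)] at chain
      have step5 := emcOp_le_add h0R (emcOp_nonneg h0R hfj0 (hd0' hjS hmS)) hC0
        (R := R) (a := emcOp R (f j) (d j m)) (b := emcOp R (t p) r)
      linarith
    · have step1 : d m p ≤ emcOp R (d m q) (d q p) :=
        le_emcOp (hdR m hmS p hpS) (hd0' hmS hpS) (hdtri m hmS p hpS q hqS)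
      have chain : d m p ≤ emcOp R (d m q) (emcOp R (emcOp R (t q) (t p)) r) :=
        le_trans step1
          (emcOp_mono_right h0R (hd0' hmS hqS) (hd0' hqS hpS) (H8 q hqS p hpS))
      rw [emcOp_assoc hcl hpos h0R h4 (htR q hqS) (htR p hpS) hrR] at chain
      rw [emcI3 hcl hpos h0R h4 (hdR m hmS q hqS) (htR q hqS) (htR p hpS) hrR] at chain
      have step5 := emcOp_le_add h0R
        (emcOp_nonneg h0R (emcOp_nonneg h0R (ht0' hqS) (hd0' hmS hqS)) hr0) (ht0' hpS)
        (R := R) (a := emcOp R (emcOp R (t q) (d m q)) r) (b := t p)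
      have step6 : t p ≤ emcOp R (t p) r := le_emcOp_left (htR p hpS) (ht0' hpS) hr0
      linarith
  have P7 : ∀ j, j < m → j ∈ S → f j ≤ emcOp R (f m) (d j m) := by
    intro j hjm hjS
    obtain ⟨hfjR, -, IHP3, IHP4, -, -, -, -⟩ := IH j hjm hjS
    have hfj0 : 0 ≤ f j := hpos _ hfjR
    apply key hfjR (hd0' hjS hmS)
    rintro z (⟨j', ⟨hj'm, hj'S⟩, rfl⟩ | ⟨q, hqS, rfl⟩)
    · obtain ⟨hfj'R, -, -, IH'P4, -, -, IH'P7, -⟩ := IH j' hj'm hj'S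
      have hfj'0 : 0 ≤ f j' := hpos _ hfj'R
      have hjj' : f j ≤ emcOp R (f j') (d j' j) := by
        rcases lt_trichotomy j j' with h | h | h
        · have := IH'P7 j h hjS
          rwa [hdsym j j'] at this
        · subst h
          rw [hd0 j, emcOp_zero hfj'R hfj'0]
        · exact IHP4 j' h hj'S
      have step2 : d j' j ≤ emcOp R (d j' m) (d j m) :=
        le_emcOp (hdR j' hj'S j hjS) (hd0' hj'S hjS) (by
          have h1 := hdtri j' hj'S j hjS m hmS
          have h2 := hdsym m j; linarith)
      have chain : f j ≤ emcOp R (f j') (emcOp R (d j' m) (d j m)) :=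
        le_trans hjj' (emcOp_mono_right h0R hfj'0 (hd0' hj'S hjS) step2)
      rw [← emcOp_assoc hcl hpos h0R h4 hfj'R (hdR j' hj'S m hmS) (hdR j hjS m hmS)] at chain
      have step5 := emcOp_le_add h0R (emcOp_nonneg h0R hfj'0 (hd0' hj'S hmS)) (hd0' hjS hmS)
        (R := R) (a := emcOp R (f j') (d j' m)) (b := d j m)
      linarith
    · have step2 : d j q ≤ emcOp R (d j m) (d m q) :=
        le_emcOp (hdR j hjS q hqS) (hd0' hjS hqS) (hdtri j hjS q hqS m hmS)
      have chain : f j ≤ emcOp R (emcOp R (t q) (emcOp R (d j m) (d m q))) r :=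
        le_trans (IHP3 q hqS)
          (emcOp_mono_left h0R
            (emcOp_nonneg h0R (ht0' hqS) (hd0' hjS hqS)) hr0
            (emcOp_mono_right h0R (ht0' hqS) (hd0' hjS hqS) step2))
      rw [emcI6 hcl hpos h0R h4 (htR q hqS) (hdR j hjS m hmS) (hdR m hmS q hqS) hrR] at chain
      have step5 := emcOp_le_add h0R
        (emcOp_nonneg h0R (emcOp_nonneg h0R (ht0' hqS) (hd0' hmS hqS)) hr0) (hd0' hjS hmS)
        (R := R) (a := emcOp R (emcOp R (t q) (d m q)) r) (b := d j m)
      linarith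
  have P8 : ∀ j, j < m → j ∈ S → d j m ≤ emcOp R (f m) (f j) := by
    intro j hjm hjS
    obtain ⟨hfjR, -, -, -, -, IHP6j, -, IHP8j⟩ := IH j hjm hjS
    have hfj0 : 0 ≤ f j := hpos _ hfjR
    apply key (hdR j hjS m hmS) hfj0
    rintro z (⟨j', ⟨hj'm, hj'S⟩, rfl⟩ | ⟨q, hqS, rfl⟩)
    · obtain ⟨hfj'R, -, -, -, -, -, -, IH'P8⟩ := IH j' hj'm hj'S
      have hfj'0 : 0 ≤ f j' := hpos _ hfj'R
      have step2 : d j j' ≤ emcOp R (f j) (f j') := by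
        rcases lt_trichotomy j j' with h | h | h
        · have := IH'P8 j h hjS
          exact le_trans this (le_of_eq (emcOp_comm R _ _))
        · subst h
          rw [hd0 j]
          exact emcOp_nonneg h0R hfj0 hfj0
        · have := IHP8j j' h hj'S
          rwa [hdsym j' j] at this
      have step1 : d j m ≤ emcOp R (d j j') (d j' m) :=
        le_emcOp (hdR j hjS m hmS) (hd0' hjS hmS) (hdtri j hjS m hmS j' hj'S)
      have chain : d j m ≤ emcOp R (emcOp R (f j) (f j')) (d j' m) :=
        le_trans step1
          (emcOp_mono_left h0R (hd0' hjS hj'S) (hd0' hj'S hmS) step2)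
      rw [emcI7 hcl hpos h0R h4 hfjR hfj'R (hdR j' hj'S m hmS)] at chain
      have step5 := emcOp_le_add h0R (emcOp_nonneg h0R hfj'0 (hd0' hj'S hmS)) hfj0
        (R := R) (a := emcOp R (f j') (d j' m)) (b := f j)
      linarith
    · have step1 : d j m ≤ emcOp R (d j q) (d m q) :=
        le_emcOp (hdR j hjS m hmS) (hd0' hjS hmS) (by
          have h1 := hdtri j hjS m hmS q hqS
          have h2 := hdsym q m; linarith)
      have chain : d j m ≤ emcOp R (emcOp R (f j) (emcOp R (t q) r)) (d m q) :=
        le_trans step1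
          (emcOp_mono_left h0R (hd0' hjS hqS) (hd0' hmS hqS) (IHP6j q hqS))
      rw [emcI8 hcl hpos h0R h4 hfjR (htR q hqS) (hdR m hmS q hqS) hrR] at chain
      have step5 := emcOp_le_add h0R
        (emcOp_nonneg h0R (emcOp_nonneg h0R (ht0' hqS) (hd0' hmS hqS)) hr0) hfj0
        (R := R) (a := emcOp R (emcOp R (t q) (d m q)) r) (b := f j)
      linarith
  exact ⟨P1, P2, P3, P4, P5, P6, P7, P8⟩
end inner

/-- The set of points present before stage `N`. -/
def emcS (I : Set ℕ) (N : ℕ) : Set ℕ := {m | m ∈ I ∨ m < N}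

open Classical in
/-- The partial metric after the stages `< N` have been performed. -/
noncomputable def emcM (R : Set ℝ) (r : ℝ) (I : Set ℕ) (dU dV : ℕ → ℕ → ℝ) :
    ℕ → ℕ → ℕ → ℝ
  | 0 => fun i j => if i = j then 0 else dV i j
  | (N+1) => fun i j =>
      if N ∈ I then emcM R r I dU dV N i j
      else if i = j then 0
      else if i = N then emcRow R r (emcS I N) (emcM R r I dU dV N) (fun p => dU N p) j
      else if j = N then emcRow R r (emcS I N) (emcM R r I dU dV N) (fun p => dU N p) i
      else emcM R r I dU dV N i j

section outer
variable {R : Set ℝ} (hcl : IsClosed R) (hpos : ∀ x ∈ R, 0 ≤ x) (h0R : (0:ℝ) ∈ R)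
    (h4 : FourValues R) {r : ℝ} (hrR : r ∈ R) (hrpos : 0 < r)
    {I : Set ℕ} {dU dV : ℕ → ℕ → ℝ}
    (hdUR : ∀ i j, dU i j ∈ R) (hdU0 : ∀ i, dU i i = 0)
    (hdUsym : ∀ i j, dU i j = dU j i)
    (hdUtri : ∀ i j k, dU i k ≤ dU i j + dU j k)
    (hdVR : ∀ i ∈ I, ∀ j ∈ I, dV i j ∈ R)
    (hdV0 : ∀ i, dV i i = 0) (hdVsym : ∀ i j, dV i j = dV j i)
    (hdVtri : ∀ i j k, dV i k ≤ dV i j + dV j k)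
    (hdVpos : ∀ i ∈ I, ∀ j ∈ I, i ≠ j → 0 < dV i j)
    (hclose : ∀ i ∈ I, ∀ j ∈ I, |dU i j - dV i j| ≤ r)

lemma emcM_diag : ∀ N i, emcM R r I dU dV N i i = 0 := by
  intro N
  induction N with
  | zero => intro i; simp [emcM]
  | succ N IH =>
    intro i
    by_cases hNI : N ∈ I <;> simp [emcM, hNI, IH]

include hdVsym in
lemma emcM_symm : ∀ N i j, emcM R r I dU dV N i j = emcM R r I dU dV N j i := by
  intro N
  induction N with
  | zero =>
    intro i j
    by_cases h : i = j
    · subst h; rfl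
    · simp [emcM, h, Ne.symm h, hdVsym i j]
  | succ N IH =>
    intro i j
    by_cases hNI : N ∈ I
    · simp [emcM, hNI, IH i j]
    · by_cases hij : i = j
      · subst hij; rfl
      · by_cases hiN : i = N
        · subst hiN
          simp [emcM, hNI, hij, Ne.symm hij]
        · by_cases hjN : j = N
          · subst hjN
            simp [emcM, hNI, hij, Ne.symm hij, hiN]
          · simp [emcM, hNI, hij, Ne.symm hij, hiN, hjN, IH i j]

lemma emcS_zero : emcS I 0 = I := by
  ext m; simp [emcS]

lemma emcS_mono {N N' : ℕ} (h : N ≤ N') : emcS I N ⊆ emcS I N' := by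
  intro m hm
  rcases hm with hm | hm
  · exact Or.inl hm
  · exact Or.inr (lt_of_lt_of_le hm h)

lemma emcM_stab : ∀ N' N, N ≤ N' → ∀ i ∈ emcS I N, ∀ j ∈ emcS I N,
    emcM R r I dU dV N' i j = emcM R r I dU dV N i j := by
  intro N'
  induction N' with
  | zero => intro N hN i _ j _; rw [Nat.le_zero.mp hN]
  | succ N' IH =>
    intro N hN i hi j hj
    rcases Nat.lt_or_ge N (N'+1) with hlt | hge
    · have hNN' : N ≤ N' := Nat.lt_succ_iff.mp hlt
      by_cases hNI : N' ∈ I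
      · rw [show emcM R r I dU dV (N'+1) i j = emcM R r I dU dV N' i j by
          simp [emcM, hNI]]
        exact IH N hNN' i hi j hj
      · have hiN' : i ≠ N' := by
          rintro rfl
          rcases hi with hi | hi
          · exact hNI hi
          · omega
        have hjN' : j ≠ N' := by
          rintro rfl
          rcases hj with hj | hj
          · exact hNI hj
          · omega
        by_cases hij : i = j
        · subst hij
          rw [emcM_diag, emcM_diag]
        · rw [show emcM R r I dU dV (N'+1) i j = emcM R r I dU dV N' i j by
            simp [emcM, hNI, hij, hiN', hjN']]
          exact IH N hNN' i hi j hj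
    · have : N = N' + 1 := le_antisymm hN hge
      rw [this]

include hcl hpos h0R h4 hrR hrpos hdUR hdU0 hdUsym hdUtri hdVR hdV0 hdVsym hdVtri hdVpos hclose in
lemma emcM_inv : ∀ N,
    (∀ i ∈ emcS I N, ∀ j ∈ emcS I N, emcM R r I dU dV N i j ∈ R) ∧
    (∀ i ∈ emcS I N, ∀ j ∈ emcS I N, ∀ k ∈ emcS I N,
      emcM R r I dU dV N i k ≤ emcM R r I dU dV N i j + emcM R r I dU dV N j k) ∧
    (∀ i ∈ emcS I N, ∀ j ∈ emcS I N, |dU i j - emcM R r I dU dV N i j| ≤ r) ∧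
    (∀ i ∈ emcS I N, ∀ j ∈ emcS I N, i ≠ j → 0 < emcM R r I dU dV N i j) := by
  have hr0 : (0:ℝ) ≤ r := hrpos.le
  intro N
  induction N with
  | zero =>
    have hmem : ∀ m, m ∈ emcS I 0 → m ∈ I := by
      intro m hm; rcases hm with hm | hm
      · exact hm
      · omega
    have hval : ∀ a b, emcM R r I dU dV 0 a b = dV a b := by
      intro a b
      by_cases h : a = b
      · subst h; simp [emcM, hdV0]
      · simp [emcM, h]
    refine ⟨?_, ?_, ?_, ?_⟩
    · intro i hi j hj; rw [hval]; exact hdVR i (hmem i hi) j (hmem j hj)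
    · intro i _ j _ k _; rw [hval, hval, hval]; exact hdVtri i j k
    · intro i hi j hj; rw [hval]; exact hclose i (hmem i hi) j (hmem j hj)
    · intro i hi j hj hij; rw [hval]; exact hdVpos i (hmem i hi) j (hmem j hj) hij
  | succ N IH =>
    by_cases hNI : N ∈ I
    · have hSeq : emcS I (N+1) = emcS I N := by
        ext m
        constructor
        · rintro (hm | hm)
          · exact Or.inl hm
          · rcases Nat.lt_succ_iff_lt_or_eq.mp hm with h | h
            · exact Or.inr h
            · exact Or.inl (h ▸ hNI)
        · exact fun hm => emcS_mono (Nat.le_succ N) hm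
      have hMeq : ∀ i j, emcM R r I dU dV (N+1) i j = emcM R r I dU dV N i j := by
        intro i j; simp [emcM, hNI]
      rw [hSeq]
      simp only [hMeq]
      exact IH
    · obtain ⟨IR, Itri, Iclose, Ipos⟩ := IH
      set S := emcS I N with hSdef
      set d := emcM R r I dU dV N with hddef
      set t : ℕ → ℝ := fun p => dU N p with htdef
      have hd0 : ∀ p, d p p = 0 := emcM_diag N
      have hdsym : ∀ p q, d p q = d q p := emcM_symm hdVsym N
      have hdtri : ∀ p ∈ S, ∀ q ∈ S, ∀ s ∈ S, d p q ≤ d p s + d s q :=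
        fun p hp q hq s hs => Itri p hp s hs q hq
      have htR : ∀ p ∈ S, t p ∈ R := fun p _ => hdUR N p
      have H6 : ∀ p ∈ S, ∀ q ∈ S, t p ≤ emcOp R (t q) (emcOp R (d p q) r) := by
        intro p hp q hq
        have l1 : dU N p ≤ emcOp R (dU N q) (dU q p) :=
          le_emcOp (hdUR N p) (hpos _ (hdUR N p)) (hdUtri N q p)
        have l2 : dU q p ≤ emcOp R (d p q) r := by
          apply le_emcOp (hdUR q p) (hpos _ (hdUR q p))
          have hc := abs_le.mp (Iclose p hp q hq)
          rw [hdUsym q p]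
          linarith [hc.2]
        exact le_trans l1
          (emcOp_mono_right h0R (hpos _ (hdUR N q)) (hpos _ (hdUR q p)) l2)
      have H8 : ∀ p ∈ S, ∀ q ∈ S, d p q ≤ emcOp R (emcOp R (t p) (t q)) r := by
        intro p hp q hq
        have l1 : d p q ≤ emcOp R (dU p q) r := by
          apply le_emcOp (IR p hp q hq) (hpos _ (IR p hp q hq))
          have hc := abs_le.mp (Iclose p hp q hq)
          linarith [hc.1]
        have l2 : dU p q ≤ emcOp R (dU N p) (dU N q) := by
          apply le_emcOp (hdUR p q) (hpos _ (hdUR p q))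
          have h1 := hdUtri p N q
          rw [hdUsym p N] at h1
          exact h1
        exact le_trans l1
          (emcOp_mono_left h0R (hpos _ (hdUR p q)) hr0 l2)
      have hdR : ∀ p ∈ S, ∀ q ∈ S, d p q ∈ R := IR
      set row := emcRow R r S d t with hrowdef
      have RI := fun m (hm : m ∈ S) =>
        emcRow_inv hcl hpos h0R h4 hrR hr0 hdR hd0 hdsym hdtri htR H6 H8 m hm
      have hrowR : ∀ m ∈ S, row m ∈ R := fun m hm => (RI m hm).1
      have hrow0 : ∀ m ∈ S, 0 ≤ row m := fun m hm => hpos _ (hrowR m hm)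
      have hrowr : ∀ m ∈ S, r ≤ row m := fun m hm => (RI m hm).2.1
      have hd0' : ∀ {p q : ℕ}, p ∈ S → q ∈ S → 0 ≤ d p q :=
        fun hp hq => hpos _ (hdR _ hp _ hq)
      -- Lipschitz property of the new row
      have rowLip : ∀ m ∈ S, ∀ m' ∈ S, row m' ≤ row m + d m m' := by
        intro m hm m' hm'
        rcases lt_trichotomy m' m with h | h | h
        · have h7 := (RI m hm).2.2.2.2.2.2.1 m' h hm'
          have := emcOp_le_add (R := R) h0R (hrow0 m hm) (hd0' hm' hm)
          rw [hdsym m m']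
          linarith
        · rw [h, hd0]
          linarith
        · have h4' := (RI m' hm').2.2.2.1 m h hm
          have := emcOp_le_add (R := R) h0R (hrow0 m hm) (hd0' hm hm')
          linarith
      -- sum property of the new row
      have rowSum : ∀ a ∈ S, ∀ b ∈ S, d a b ≤ row a + row b := by
        intro a ha b hb
        rcases lt_trichotomy a b with h | h | h
        · have h8 := (RI b hb).2.2.2.2.2.2.2 a h ha
          have := emcOp_le_add (R := R) h0R (hrow0 b hb) (hrow0 a ha)
          linarith
        · rw [h, hd0]
          linarith [hrow0 b hb]
        · have h8 := (RI a ha).2.2.2.2.2.2.2 b h hb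
          have := emcOp_le_add (R := R) h0R (hrow0 a ha) (hrow0 b hb)
          rw [hdsym a b]
          linarith
      -- closeness of the new row
      have rowClose : ∀ m ∈ S, |dU N m - row m| ≤ r := by
        intro m hm
        have hub : row m ≤ t m + r := by
          have h3 := (RI m hm).2.2.1 m hm
          rw [hd0 m, emcOp_zero (htR m hm) (hpos _ (htR m hm))] at h3
          have := emcOp_le_add (R := R) h0R (hpos _ (htR m hm)) hr0
          linarith
        have hlb : t m ≤ row m + r := by
          have h5 := (RI m hm).2.2.2.2.1 m hm
          rw [hd0 m, emcOp_comm R 0 r, emcOp_zero hrR hr0] at h5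
          have := emcOp_le_add (R := R) h0R (hrow0 m hm) hr0
          linarith
        rw [abs_le]
        constructor
        · linarith
        · linarith
      -- unfolding facts for the new partial metric
      have hNnotS : N ∉ S := by
        rintro (h | h)
        · exact hNI h
        · omega
      have hg1 : ∀ m, m ≠ N → emcM R r I dU dV (N+1) N m = row m := by
        intro m hm
        simp [emcM, hNI, Ne.symm hm, ← hddef, ← hSdef]
        rfl
      have hg2 : ∀ m, m ≠ N → emcM R r I dU dV (N+1) m N = row m := by
        intro m hm
        simp [emcM, hNI, hm, ← hddef, ← hSdef]
        rfl
      have hg3 : ∀ a b, a ≠ N → b ≠ N → emcM R r I dU dV (N+1) a b = d a b := by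
        intro a b ha hb
        by_cases hab : a = b
        · subst hab
          rw [emcM_diag, hd0]
        · simp [emcM, hNI, hab, ha, hb, ← hddef]
      have hgNN : emcM R r I dU dV (N+1) N N = 0 := emcM_diag _ _
      have hSdecomp : ∀ m, m ∈ emcS I (N+1) → m ∈ S ∨ N = m := by
        intro m hm
        rcases hm with hm | hm
        · exact Or.inl (Or.inl hm)
        · rcases Nat.lt_succ_iff_lt_or_eq.mp hm with h | h
          · exact Or.inl (Or.inr h)
          · exact Or.inr h.symm
      have hSne : ∀ m ∈ S, m ≠ N := by
        intro m hm h
        exact hNnotS (h ▸ hm)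
      refine ⟨?_, ?_, ?_, ?_⟩
      · intro i hi j hj
        rcases hSdecomp i hi with hiS | rfl <;> rcases hSdecomp j hj with hjS | rfl
        · rw [hg3 i j (hSne i hiS) (hSne j hjS)]; exact hdR i hiS j hjS
        · rw [hg2 i (hSne i hiS)]; exact hrowR i hiS
        · rw [hg1 j (hSne j hjS)]; exact hrowR j hjS
        · rw [hgNN]; exact h0R
      · intro i hi j hj k hk
        rcases hSdecomp i hi with hiS | rfl <;> rcases hSdecomp j hj with hjS | rfl <;>
          rcases hSdecomp k hk with hkS | rfl
        · rw [hg3 i j (hSne i hiS) (hSne j hjS), hg3 j k (hSne j hjS) (hSne k hkS),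
            hg3 i k (hSne i hiS) (hSne k hkS)]
          exact Itri i hiS j hjS k hkS
        · rw [hg3 i j (hSne i hiS) (hSne j hjS), hg2 i (hSne i hiS), hg2 j (hSne j hjS)]
          have := rowLip j hjS i hiS
          rw [hdsym j i] at this
          linarith
        · rw [hg1 k (hSne k hkS), hg2 i (hSne i hiS), hg3 i k (hSne i hiS) (hSne k hkS)]
          exact rowSum i hiS k hkS
        · rw [hg2 i (hSne i hiS), hgNN]
          have := hrow0 i hiS
          linarith [le_refl (row i)]
        · rw [hg1 j (hSne j hjS), hg1 k (hSne k hkS), hg3 j k (hSne j hjS) (hSne k hkS)]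
          exact rowLip j hjS k hkS
        · rw [hg1 j (hSne j hjS), hg2 j (hSne j hjS), hgNN]
          have := hrow0 j hjS
          linarith
        · rw [hg1 k (hSne k hkS), hgNN]
          have := hrow0 k hkS
          linarith
        · rw [hgNN]
          linarith
      · intro i hi j hj
        rcases hSdecomp i hi with hiS | rfl <;> rcases hSdecomp j hj with hjS | rfl
        · rw [hg3 i j (hSne i hiS) (hSne j hjS)]; exact Iclose i hiS j hjS
        · rw [hg2 i (hSne i hiS), hdUsym i N]
          exact rowClose i hiS
        · rw [hg1 j (hSne j hjS)]
          exact rowClose j hjS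
        · rw [hgNN, hdU0]
          simpa using hr0
      · intro i hi j hj hij
        rcases hSdecomp i hi with hiS | rfl <;> rcases hSdecomp j hj with hjS | rfl
        · rw [hg3 i j (hSne i hiS) (hSne j hjS)]; exact Ipos i hiS j hjS hij
        · rw [hg2 i (hSne i hiS)]; exact lt_of_lt_of_le hrpos (hrowr i hiS)
        · rw [hg1 j (hSne j hjS)]; exact lt_of_lt_of_le hrpos (hrowr j hjS)
        · exact absurd rfl hij
end outer

section construct
variable {R : Set ℝ} (hcl : IsClosed R) (hpos : ∀ x ∈ R, 0 ≤ x) (h0R : (0:ℝ) ∈ R)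
    (h4 : FourValues R) {r : ℝ} (hrR : r ∈ R) (hrpos : 0 < r)
    {I : Set ℕ} {dU dV : ℕ → ℕ → ℝ}
    (hdUR : ∀ i j, dU i j ∈ R) (hdU0 : ∀ i, dU i i = 0)
    (hdUsym : ∀ i j, dU i j = dU j i)
    (hdUtri : ∀ i j k, dU i k ≤ dU i j + dU j k)
    (hdVR : ∀ i ∈ I, ∀ j ∈ I, dV i j ∈ R)
    (hdV0 : ∀ i, dV i i = 0) (hdVsym : ∀ i j, dV i j = dV j i)
    (hdVtri : ∀ i j k, dV i k ≤ dV i j + dV j k)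
    (hdVpos : ∀ i ∈ I, ∀ j ∈ I, i ≠ j → 0 < dV i j)
    (hclose : ∀ i ∈ I, ∀ j ∈ I, |dU i j - dV i j| ≤ r)

include hcl hpos h0R h4 hrR hrpos hdUR hdU0 hdUsym hdUtri hdVR hdV0 hdVsym hdVtri hdVpos hclose in
lemma emc_construct : ∃ dW : ℕ → ℕ → ℝ,
    (∀ i, dW i i = 0) ∧
    (∀ i j, i ≠ j → 0 < dW i j) ∧
    (∀ i j, dW i j = dW j i) ∧
    (∀ i j k, dW i k ≤ dW i j + dW j k) ∧
    (∀ i j, dW i j ∈ R) ∧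
    (∀ i ∈ I, ∀ j ∈ I, dW i j = dV i j) ∧
    (∀ i j, |dU i j - dW i j| ≤ r) := by
  classical
  have hinv := emcM_inv hcl hpos h0R h4 hrR hrpos hdUR hdU0 hdUsym hdUtri hdVR hdV0
    hdVsym hdVtri hdVpos hclose
  set dW : ℕ → ℕ → ℝ :=
    fun i j => if i = j then 0 else emcM R r I dU dV (max i j + 1) i j with hdWdef
  have hmem : ∀ (a N : ℕ), a < N → a ∈ emcS I N := fun a N h => Or.inr h
  have hltmax : ∀ a b : ℕ, a < max a b + 1 ∧ b < max a b + 1 := by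
    intro a b
    constructor
    · exact Nat.lt_succ_of_le (Nat.le_max_left a b)
    · exact Nat.lt_succ_of_le (Nat.le_max_right a b)
  have cv : ∀ (N a b : ℕ), a < N → b < N → dW a b = emcM R r I dU dV N a b := by
    intro N a b ha hb
    by_cases hab : a = b
    · subst hab
      rw [emcM_diag]
      simp [hdWdef]
    · rw [hdWdef]
      simp only [if_neg hab]
      have h1 : max a b + 1 ≤ N := by omega
      rw [emcM_stab N (max a b + 1) h1 a (hmem a _ (hltmax a b).1) b (hmem b _ (hltmax a b).2)]
  have hdW0 : ∀ i, dW i i = 0 := by intro i; simp [hdWdef]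
  have hdWmem : ∀ i j, dW i j ∈ R := by
    intro i j
    by_cases hij : i = j
    · subst hij; rw [hdW0]; exact h0R
    · set N := max i j + 1
      rw [cv N i j (hltmax i j).1 (hltmax i j).2]
      exact (hinv N).1 i (hmem i N (hltmax i j).1) j (hmem j N (hltmax i j).2)
  have hdWnonneg : ∀ i j, 0 ≤ dW i j := fun i j => hpos _ (hdWmem i j)
  refine ⟨dW, hdW0, ?_, ?_, ?_, hdWmem, ?_, ?_⟩
  · -- positivity
    intro i j hij
    set N := max i j + 1
    rw [cv N i j (hltmax i j).1 (hltmax i j).2]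
    exact (hinv N).2.2.2 i (hmem i N (hltmax i j).1) j (hmem j N (hltmax i j).2) hij
  · -- symmetry
    intro i j
    by_cases hij : i = j
    · subst hij; rfl
    · set N := max i j + 1
      have hN' : max j i + 1 = N := by rw [Nat.max_comm]
      rw [cv N i j (hltmax i j).1 (hltmax i j).2]
      rw [show dW j i = emcM R r I dU dV N j i from by
        rw [← hN']; exact cv _ j i (hltmax j i).1 (hltmax j i).2]
      exact emcM_symm hdVsym N i j
  · -- triangle
    intro i j k
    set N := max i (max j k) + 1 with hNdef
    have hiN : i < N := Nat.lt_succ_of_le (Nat.le_max_left _ _)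
    have hjN : j < N := Nat.lt_succ_of_le (le_trans (Nat.le_max_left j k) (Nat.le_max_right _ _))
    have hkN : k < N := Nat.lt_succ_of_le (le_trans (Nat.le_max_right j k) (Nat.le_max_right _ _))
    rw [cv N i j hiN hjN, cv N j k hjN hkN, cv N i k hiN hkN]
    exact (hinv N).2.1 i (hmem i N hiN) j (hmem j N hjN) k (hmem k N hkN)
  · -- agreement with dV on I
    intro i hi j hj
    by_cases hij : i = j
    · subst hij; rw [hdW0, hdV0]
    · have hiS : i ∈ emcS I 0 := Or.inl hi
      have hjS : j ∈ emcS I 0 := Or.inl hj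
      rw [hdWdef]
      simp only [if_neg hij]
      rw [emcM_stab (max i j + 1) 0 (Nat.zero_le _) i hiS j hjS]
      simp [emcM, hij]
  · -- closeness to dU
    intro i j
    by_cases hij : i = j
    · subst hij
      rw [hdW0, hdU0]
      simpa using hrpos.le
    · set N := max i j + 1
      rw [cv N i j (hltmax i j).1 (hltmax i j).2]
      exact (hinv N).2.2.1 i (hmem i N (hltmax i j).1) j (hmem j N (hltmax i j).2)
end construct

/-- Given disjoint countable metric spaces `U = {uᵢ | i ∈ ω}` and `V = {vᵢ | i ∈ I}`
with distances in `R` and `|δ^U(uᵢ,uⱼ) − δ^V(vᵢ,vⱼ)| ≤ r` for `i,j ∈ I`, there is a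
metric `δ^W` on a point set `W = {wᵢ | i ∈ ω}` with distances in `R`, with `wᵢ = vᵢ`
for `i ∈ I` (`δ^W` agrees with `δ^V` on `V`), such that
`|δ^U(uᵢ,uⱼ) − δ^W(wᵢ,wⱼ)| ≤ r` for all `i,j ∈ ω`. -/
theorem extend_metric_close (R : Set ℝ) (hne : R.Nonempty) (hcl : IsClosed R)
    (hpos : ∀ x ∈ R, 0 ≤ x) (h4 : FourValues R)
    (r : ℝ) (hrR : r ∈ R) (hr : 0 < r)
    (α β : Type) [MetricSpace α] [MetricSpace β] [Countable α] [Countable β]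
    (hdU : ∀ x y : α, dist x y ∈ R) (hdV : ∀ x y : β, dist x y ∈ R)
    (u : ℕ → α) (hu : Function.Bijective u)
    (I : Set ℕ) (v : ℕ → β) (hv : Set.BijOn v I Set.univ)
    (hclose : ∀ i ∈ I, ∀ j ∈ I, |dist (u i) (u j) - dist (v i) (v j)| ≤ r) :
    ∃ dW : ℕ → ℕ → ℝ,
      (∀ i, dW i i = 0) ∧
      (∀ i j, i ≠ j → 0 < dW i j) ∧
      (∀ i j, dW i j = dW j i) ∧
      (∀ i j k, dW i k ≤ dW i j + dW j k) ∧
      (∀ i j, dW i j ∈ R) ∧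
      (∀ i ∈ I, ∀ j ∈ I, dW i j = dist (v i) (v j)) ∧
      (∀ i j, |dist (u i) (u j) - dW i j| ≤ r) := by
  have h0R : (0:ℝ) ∈ R := by
    have h := hdU (u 0) (u 0)
    rwa [dist_self] at h
  exact emc_construct hcl hpos h0R h4 hrR hr
    (dU := fun i j => dist (u i) (u j)) (dV := fun i j => dist (v i) (v j)) (I := I)
    (fun i j => hdU _ _) (fun i => dist_self _) (fun i j => dist_comm _ _)
    (fun i j k => dist_triangle _ _ _)
    (fun i hi j hj => hdV _ _) (fun i => dist_self _) (fun i j => dist_comm _ _)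
    (fun i j k => dist_triangle _ _ _)
    (fun i hi j hj hij => dist_pos.mpr (fun h => hij (hv.injOn hi hj h)))
    hclose
end

section
/- Let R be a nonempty closed and bounded subset of the nonnegative reals satisfying the 4-values condition. Then for every ε > 0 and every finite B ⊆ R there exists a finite ε-approximation S of R which is subadditive closed and with B ⊆ S. -/
/-- `A` is a finite `ε`-approximation of `R`: a finite subset of `R` with
`max A = max R` such that every nonzero `l ∈ R` has an element of `A` within `ε`
above it. -/
def IsFiniteApprox (R A : Set ℝ) (ε : ℝ) : Prop :=
  A ⊆ R ∧ A.Finite ∧ sSup R ∈ A ∧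
    ∀ l ∈ R, l ≠ 0 → ∃ a ∈ A, l ≤ a ∧ a - l < ε

/-- `A ⊆ R` is subadditive closed if it is closed under `⊕` (computed in `R`). -/
def IsSubadditiveClosed (R A : Set ℝ) : Prop :=
  ∀ a ∈ A, ∀ b ∈ A, oplus R a b ∈ A

lemma oplus_basic {R : Set ℝ} (hcl : IsClosed R) {a b : ℝ}
    (ha : a ∈ R) (hb0 : 0 ≤ b) :
    oplus R a b ∈ R ∧ oplus R a b ≤ a + b ∧ a ≤ oplus R a b ∧
      ∀ r ∈ R, r ≤ a + b → r ≤ oplus R a b := by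
  have h1 : IsClosed {x | x ∈ R ∧ x ≤ a + b} := by
    have h : {x | x ∈ R ∧ x ≤ a + b} = R ∩ Set.Iic (a + b) := rfl
    rw [h]; exact hcl.inter isClosed_Iic
  have h2 : ({x | x ∈ R ∧ x ≤ a + b}).Nonempty := ⟨a, ha, by linarith⟩
  have h3 : BddAbove {x | x ∈ R ∧ x ≤ a + b} := ⟨a + b, fun x hx => hx.2⟩
  have hmem := h1.csSup_mem h2 h3
  exact ⟨hmem.1, hmem.2, le_csSup h3 ⟨ha, by linarith⟩, fun r hr hr' => le_csSup h3 ⟨hr, hr'⟩⟩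

lemma oplus_key {R : Set ℝ} (hcl : IsClosed R) (hpos : ∀ x ∈ R, 0 ≤ x) (h4 : FourValues R)
    {a b c : ℝ} (ha : a ∈ R) (hb : b ∈ R) (hc : c ∈ R) :
    oplus R (oplus R b c) a ≤ oplus R (oplus R a b) c := by
  obtain ⟨hxR, hxle, hbx, hxsup⟩ := oplus_basic hcl hb (hpos c hc)
  set x := oplus R b c with hxdef
  have hcx : c ≤ x := hxsup c hc (by linarith [hpos b hb])
  obtain ⟨hyR, hyle, hxy, hysup⟩ := oplus_basic hcl hxR (hpos a ha)
  set y := oplus R x a with hydef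
  have hay : a ≤ y := hysup a ha (by linarith [hpos x hxR])
  obtain ⟨y', hy', hm1, hm2⟩ := h4 y hyR a ha b hb c hc
    (max_le hay (max_le (hbx.trans hxy) (hcx.trans hxy))) (by linarith) x hxR
    ⟨by linarith, by linarith [hpos x hxR], by linarith [hpos a ha]⟩
    ⟨by linarith [hpos c hc], by linarith [hpos b hb], hxle⟩
  obtain ⟨habR, hable, hahab, habsup⟩ := oplus_basic hcl ha (hpos b hb)
  have h1 : y' ≤ oplus R a b := habsup y' hy' (by linarith [hm2.2.2])
  obtain ⟨h2R, h2le, h2ge, h2sup⟩ := oplus_basic hcl habR (hpos c hc)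
  exact h2sup y hyR (by linarith [hm1.1])

lemma oplus_assoc {R : Set ℝ} (hcl : IsClosed R) (hpos : ∀ x ∈ R, 0 ≤ x) (h4 : FourValues R)
    {a b c : ℝ} (ha : a ∈ R) (hb : b ∈ R) (hc : c ∈ R) :
    oplus R (oplus R a b) c = oplus R a (oplus R b c) := by
  have k1 := oplus_key hcl hpos h4 ha hb hc
  have k2 := oplus_key hcl hpos h4 hc ha hb
  have k3 := oplus_key hcl hpos h4 hb hc ha
  have h : oplus R (oplus R a b) c = oplus R (oplus R b c) a := le_antisymm (k2.trans k3) k1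
  rw [h, oplus_comm]

def OChain (R : Set ℝ) : ℝ → List ℝ → Prop
  | _, [] => True
  | x, h :: t => x < oplus R x h ∧ OChain R (oplus R x h) t

def Tset (R G : Set ℝ) : ℕ → Set ℝ
  | 0 => G
  | k + 1 => Tset R G k ∪ Set.image2 (oplus R) (Tset R G k) G

section
variable {R G : Set ℝ}

lemma foldl_mem (hcl : IsClosed R) (hpos : ∀ x ∈ R, 0 ≤ x) :
    ∀ (l : List ℝ) (x : ℝ), x ∈ R → (∀ h ∈ l, h ∈ R) → l.foldl (oplus R) x ∈ R
  | [], x, hx, _ => hx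
  | h :: t, x, hx, hl => by
    rw [List.foldl_cons]
    exact foldl_mem hcl hpos t _ ((oplus_basic hcl hx (hpos _ (hl h (by simp)))).1)
      (fun g hg => hl g (by simp [hg]))

lemma oplus_foldl (hcl : IsClosed R) (hpos : ∀ x ∈ R, 0 ≤ x) (h4 : FourValues R) :
    ∀ (l : List ℝ) (x y : ℝ), x ∈ R → y ∈ R → (∀ h ∈ l, h ∈ R) →
      oplus R y (l.foldl (oplus R) x) = l.foldl (oplus R) (oplus R y x)
  | [], _, _, _, _, _ => rfl
  | h :: t, x, y, hx, hy, hl => by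
    have hh : h ∈ R := hl h (by simp)
    have hxh : oplus R x h ∈ R := (oplus_basic hcl hx (hpos _ hh)).1
    rw [List.foldl_cons, oplus_foldl hcl hpos h4 t _ y hxh hy (fun g hg => hl g (by simp [hg])),
      List.foldl_cons, oplus_assoc hcl hpos h4 hy hx hh]

lemma exists_ochain (hcl : IsClosed R) (hpos : ∀ x ∈ R, 0 ≤ x) (hG : G ⊆ R) :
    ∀ (l : List ℝ) (x : ℝ), x ∈ R → (∀ h ∈ l, h ∈ G) →
      ∃ l' : List ℝ, (∀ h ∈ l', h ∈ G) ∧ l'.length ≤ l.length ∧ OChain R x l' ∧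
        l'.foldl (oplus R) x = l.foldl (oplus R) x := by
  intro l
  induction l with
  | nil => exact fun x hx _ => ⟨[], by simp, le_refl _, trivial, rfl⟩
  | cons h t ih =>
    intro x hx hl
    have hhG : h ∈ G := hl h (by simp)
    have hh : h ∈ R := hG hhG
    obtain ⟨hxhR, hxhle, hxxh, _⟩ := oplus_basic hcl hx (hpos _ hh)
    have htG : ∀ g ∈ t, g ∈ G := fun g hg => hl g (by simp [hg])
    by_cases hlt : x < oplus R x h
    · obtain ⟨l', hl'G, hl'len, hl'c, hl'val⟩ := ih (oplus R x h) hxhR htG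
      exact ⟨h :: l', by
        intro g hg
        rcases List.mem_cons.mp hg with rfl | hg
        · exact hhG
        · exact hl'G g hg, by simpa using hl'len, ⟨hlt, hl'c⟩, by
          rw [List.foldl_cons, List.foldl_cons, hl'val]⟩
    · have heq : oplus R x h = x := le_antisymm (not_lt.mp hlt) hxxh
      obtain ⟨l', hl'G, hl'len, hl'c, hl'val⟩ := ih x hx htG
      exact ⟨l', hl'G, by simp; omega, hl'c, by rw [List.foldl_cons, heq, hl'val]⟩

lemma ochain_growth (hcl : IsClosed R) (hpos : ∀ x ∈ R, 0 ≤ x) (hG : G ⊆ R)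
    {m : ℝ} (hm : ∀ h ∈ G, 0 < h → m ≤ h) :
    ∀ (n : ℕ) (l : List ℝ), l.length ≤ n → ∀ x ∈ R, (∀ h ∈ l, h ∈ G) → OChain R x l →
      x + m * (l.length / 2 : ℕ) ≤ l.foldl (oplus R) x := by
  intro n
  induction n with
  | zero =>
    intro l hl x hx _ _
    have : l = [] := List.length_eq_zero_iff.mp (Nat.le_zero.mp hl)
    subst this; simp
  | succ n ih =>
    intro l hl x hx hlG hch
    match l with
    | [] => simp
    | [h] =>
      have hh : h ∈ R := hG (hlG h (by simp))
      obtain ⟨_, _, hxle, _⟩ := oplus_basic hcl hx (hpos _ hh)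
      simpa using hxle
    | h1 :: h2 :: t =>
      have hh1G : h1 ∈ G := hlG h1 (by simp)
      have hh2G : h2 ∈ G := hlG h2 (by simp)
      have hh1 : h1 ∈ R := hG hh1G
      have hh2 : h2 ∈ R := hG hh2G
      obtain ⟨hc1, hc2, hct⟩ := hch
      obtain ⟨hy1R, hy1le, hxy1, hy1sup⟩ := oplus_basic hcl hx (hpos _ hh1)
      obtain ⟨hy2R, hy2le, hy1y2, hy2sup⟩ := oplus_basic hcl hy1R (hpos _ hh2)
      have hpos1 : 0 < h1 := by by_contra hcon; push_neg at hcon; linarith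
      have hm1 : m ≤ h1 := hm h1 hh1G hpos1
      have hkey : x + h1 < oplus R (oplus R x h1) h2 := by
        by_contra hcon; push_neg at hcon
        exact absurd (hy1sup _ hy2R hcon) (not_le.mpr hc2)
      have hIH := ih t (by simp at hl; omega)
        (oplus R (oplus R x h1) h2) hy2R (fun g hg => hlG g (by simp [hg])) hct
      have hlen : ((h1 :: h2 :: t).length : ℕ) / 2 = t.length / 2 + 1 := by
        simp [List.length_cons]; omega
      rw [List.foldl_cons, List.foldl_cons, hlen]
      push_cast
      linarith

lemma Tset_finite (hGf : G.Finite) : ∀ k, (Tset R G k).Finite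
  | 0 => hGf
  | k + 1 => ((Tset_finite hGf k).union ((Tset_finite hGf k).image2 _ hGf))

lemma Tset_le : ∀ {k k' : ℕ}, k ≤ k' → Tset R G k ⊆ Tset R G k' := by
  intro k k' hkk
  induction k' with
  | zero => simpa [Nat.le_zero.mp hkk] using Set.Subset.rfl
  | succ n ih =>
    rcases Nat.lt_or_ge k (n+1) with h | h
    · exact (ih (Nat.lt_succ_iff.mp h)).trans Set.subset_union_left
    · have : k = n + 1 := le_antisymm hkk h
      subst this; rfl

lemma foldl_mem_Tset :
    ∀ (l : List ℝ) (x : ℝ) (k : ℕ), x ∈ Tset R G k → (∀ h ∈ l, h ∈ G) →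
      l.foldl (oplus R) x ∈ Tset R G (k + l.length)
  | [], x, k, hx, _ => by simpa using hx
  | h :: t, x, k, hx, hl => by
    have h1 : oplus R x h ∈ Tset R G (k + 1) :=
      Or.inr (Set.mem_image2_of_mem hx (hl h (by simp)))
    have := foldl_mem_Tset t (oplus R x h) (k+1) h1 (fun g hg => hl g (by simp [hg]))
    rw [List.foldl_cons]
    convert this using 2
    simp [List.length_cons]; omega

end

/-- For every `ε > 0` and every finite `B ⊆ R` there is a finite `ε`-approximation
`S` of `R` which is subadditive closed and contains `B`. -/
theorem exists_subadditive_closed_approx (R : Set ℝ) (hne : R.Nonempty)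
    (hcl : IsClosed R) (hpos : ∀ x ∈ R, 0 ≤ x) (hbdd : BddAbove R)
    (h4 : FourValues R) :
    ∀ ε > (0 : ℝ), ∀ B ⊆ R, B.Finite →
      ∃ S : Set ℝ, B ⊆ S ∧ IsFiniteApprox R S ε ∧ IsSubadditiveClosed R S := by

  intro ε hε B hBR hBfin
  have hMR : sSup R ∈ R := hcl.csSup_mem hne hbdd
  set M := sSup R with hMdef
  have hleM : ∀ x ∈ R, x ≤ M := fun x hx => le_csSup hbdd hx
  by_cases hM0 : M = 0
  · -- degenerate case R = {0}
    have h0R : (0 : ℝ) ∈ R := hM0 ▸ hMR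
    refine ⟨{0}, ?_, ⟨?_, Set.finite_singleton 0, by simp only [Set.mem_singleton_iff]; exact hM0, ?_⟩, ?_⟩
    · intro b hb
      have h1 := hleM b (hBR hb); have h2 := hpos b (hBR hb)
      simp only [Set.mem_singleton_iff]; linarith [hM0 ▸ h1]
    · intro x hx; simp only [Set.mem_singleton_iff] at hx; simpa [hx] using h0R
    · intro l hl hlne
      exact absurd (le_antisymm (hM0 ▸ hleM l hl) (hpos l hl)) hlne
    · intro a ha b hb
      simp only [Set.mem_singleton_iff] at ha hb ⊢
      subst ha; subst hb
      have h := (oplus_basic hcl h0R le_rfl).1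
      linarith [hleM _ h, hpos _ h, hM0 ▸ hleM _ h]
  · have hMpos : 0 < M := lt_of_le_of_ne (hpos M hMR) (Ne.symm hM0)
    -- the ε-net A
    set c : ℕ → ℝ := fun k => sSup (R ∩ Set.Icc 0 ((k + 1) * ε)) with hcdef
    set K' : ℕ := ⌈M / ε⌉₊ with hK'
    set A : Set ℝ := {x | x ∈ R ∧ ∃ k, k < K' ∧ x = c k} with hAdef
    have hAR : A ⊆ R := fun x hx => hx.1
    have hAfin : A.Finite := by
      apply Set.Finite.subset ((Set.finite_Iio K').image c)
      rintro x ⟨-, k, hk, rfl⟩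
      exact ⟨k, hk, rfl⟩
    have hAnet : ∀ l ∈ R, l ≠ 0 → ∃ a ∈ A, l ≤ a ∧ a - l < ε := by
      intro l hl hlne
      have hl0 : 0 < l := lt_of_le_of_ne (hpos l hl) (Ne.symm hlne)
      set k : ℕ := ⌈l / ε⌉₊ - 1 with hkdef
      have hk1 : 1 ≤ ⌈l / ε⌉₊ := Nat.one_le_ceil_iff.mpr (by positivity)
      have hkc : (k : ℝ) = (⌈l / ε⌉₊ : ℝ) - 1 := by
        rw [hkdef]; push_cast [hk1]; ring
      have hup : l ≤ ((k : ℝ) + 1) * ε := by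
        have h1 : l / ε ≤ (⌈l / ε⌉₊ : ℝ) := Nat.le_ceil _
        have h2 : (k : ℝ) + 1 = (⌈l / ε⌉₊ : ℝ) := by rw [hkc]; ring
        rw [h2, ← div_le_iff₀ hε] at *
        exact h1
      have hlow : (k : ℝ) * ε < l := by
        have h2 : (⌈l / ε⌉₊ : ℝ) < l / ε + 1 := Nat.ceil_lt_add_one (by positivity)
        rw [hkc, ← lt_div_iff₀ hε]
        linarith
      set s := R ∩ Set.Icc 0 (((k : ℝ) + 1) * ε) with hsdef
      have hsne : s.Nonempty := ⟨l, hl, hpos l hl, hup⟩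
      have hscl : IsClosed s := hcl.inter isClosed_Icc
      have hsbdd : BddAbove s := ⟨((k : ℝ) + 1) * ε, fun x hx => hx.2.2⟩
      have hmem := hscl.csSup_mem hsne hsbdd
      have hckR : c k ∈ R := hmem.1
      have hckle : c k ≤ ((k : ℝ) + 1) * ε := hmem.2.2
      have hlck : l ≤ c k := le_csSup hsbdd ⟨hl, hpos l hl, hup⟩
      have hkK : k < K' := by
        have h1 : (k : ℝ) < M / ε := by
          rw [lt_div_iff₀ hε]; linarith [hleM l hl]
        have h2 : (M / ε : ℝ) ≤ (K' : ℝ) := Nat.le_ceil _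
        exact_mod_cast h1.trans_le h2
      exact ⟨c k, ⟨hckR, k, hkK, rfl⟩, hlck, by nlinarith⟩
    -- the generating set G
    set G : Set ℝ := B ∪ A ∪ {M} with hGdef
    have hGR : G ⊆ R := by
      intro g hg
      rcases hg with (hg | hg) | hg
      · exact hBR hg
      · exact hAR hg
      · simp only [Set.mem_singleton_iff] at hg; subst hg; exact hMR
    have hGfin : G.Finite := ((hBfin.union hAfin).union (Set.finite_singleton M))
    have hMG : M ∈ G := Or.inr rfl
    -- the minimum positive element m of G
    obtain ⟨m, hmmem, hmmin⟩ := Set.exists_min_image {g ∈ G | 0 < g} id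
      (hGfin.subset (Set.sep_subset _ _)) ⟨M, hMG, hMpos⟩
    have hmpos : 0 < m := hmmem.2
    have hm : ∀ h ∈ G, 0 < h → m ≤ h := fun h hh hh0 => hmmin h ⟨hh, hh0⟩
    -- the length bound N
    set N : ℕ := 2 * ⌈M / m⌉₊ + 1 with hNdef
    -- the set S
    set S : Set ℝ :=
      {x | ∃ g ∈ G, ∃ l : List ℝ, (∀ h ∈ l, h ∈ G) ∧ x = l.foldl (oplus R) g} with hSdef
    have hGS : G ⊆ S := fun g hg => ⟨g, hg, [], by simp, rfl⟩
    have hSR : S ⊆ R := by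
      rintro x ⟨g, hg, l, hl, rfl⟩
      exact foldl_mem hcl hpos l g (hGR hg) (fun h hh => hGR (hl h hh))
    -- S is contained in Tset N, hence finite
    have hST : S ⊆ Tset R G N := by
      rintro x ⟨g, hg, l, hl, rfl⟩
      have hgR : g ∈ R := hGR hg
      obtain ⟨l', hl'G, _, hl'c, hl'val⟩ := exists_ochain hcl hpos hGR l g hgR hl
      rw [← hl'val]
      have hgrow := ochain_growth hcl hpos hGR hm l'.length l' le_rfl g hgR hl'G hl'c
      have hfR : l'.foldl (oplus R) g ∈ R :=
        foldl_mem hcl hpos l' g hgR (fun h hh => hGR (hl'G h hh))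
      have hfM : l'.foldl (oplus R) g ≤ M := hleM _ hfR
      have hg0 : 0 ≤ g := hpos g hgR
      have hhalf : ((l'.length / 2 : ℕ) : ℝ) ≤ M / m := by
        rw [le_div_iff₀ hmpos]
        nlinarith
      have hhalf' : l'.length / 2 ≤ ⌈M / m⌉₊ := by
        have := hhalf.trans (Nat.le_ceil _)
        exact_mod_cast this
      have hlen : l'.length ≤ N := by rw [hNdef]; omega
      have := foldl_mem_Tset (R := R) (G := G) l' g 0 hg hl'G
      exact Tset_le (by omega : 0 + l'.length ≤ N) this
    have hSfin : S.Finite := (Tset_finite hGfin N).subset hST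
    -- S is closed under oplus
    have hSclosed : IsSubadditiveClosed R S := by
      rintro x ⟨g, hg, l, hl, rfl⟩ y ⟨g', hg', l', hl', rfl⟩
      set xv := l.foldl (oplus R) g with hxv
      have hxvR : xv ∈ R := foldl_mem hcl hpos l g (hGR hg) (fun h hh => hGR (hl h hh))
      have hg'R : g' ∈ R := hGR hg'
      have h1 : oplus R xv (l'.foldl (oplus R) g') = l'.foldl (oplus R) (oplus R xv g') :=
        oplus_foldl hcl hpos h4 l' g' xv hg'R hxvR (fun h hh => hGR (hl' h hh))
      have h2 : oplus R xv g' = (l ++ [g']).foldl (oplus R) g := by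
        rw [List.foldl_append]; rfl
      refine ⟨g, hg, (l ++ [g']) ++ l', ?_, ?_⟩
      · intro h hh
        rcases List.mem_append.mp hh with hh | hh
        · rcases List.mem_append.mp hh with hh | hh
          · exact hl h hh
          · simp only [List.mem_singleton] at hh; subst hh; exact hg'
        · exact hl' h hh
      · rw [List.foldl_append, ← h2, ← h1]
    refine ⟨S, fun b hb => hGS (Or.inl (Or.inl hb)), ⟨hSR, hSfin, hGS hMG, ?_⟩, hSclosed⟩
    intro l hl hlne
    obtain ⟨a, haA, h1, h2⟩ := hAnet l hl hlne
    exact ⟨a, hGS (Or.inl (Or.inr haA)), h1, h2⟩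
end

section
/- Let R be a nonempty closed and bounded subset of the nonnegative reals satisfying the 4-values condition, and let A ⊆ R be finite and subadditive closed with max A = max R. If (a,b,c) is a metric triple of elements of R, then (ā, b̄, c̄) is a metric triple, where for x ∈ R, x̄ denotes the least element of A with x̄ ≥ x. -/
lemma oplus_key_s9 (R : Set ℝ) (hbdd : BddAbove R) (A : Set ℝ)
    (hAsub : IsSubadditiveClosed R A)
    (a b c a' b' c' : ℝ) (ha : a ∈ R)
    (ha' : IsLeast {t | t ∈ A ∧ a ≤ t} a')
    (hb' : IsLeast {t | t ∈ A ∧ b ≤ t} b')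
    (hc' : IsLeast {t | t ∈ A ∧ c ≤ t} c')
    (hm : a ≤ b + c) : a' ≤ b' + c' := by
  have hsA : oplus R b' c' ∈ A := hAsub b' hb'.1.1 c' hc'.1.1
  have hamem : a ∈ {x | x ∈ R ∧ x ≤ b' + c'} :=
    ⟨ha, hm.trans (add_le_add hb'.1.2 hc'.1.2)⟩
  have h1 : a ≤ oplus R b' c' :=
    le_csSup (hbdd.mono fun x hx => hx.1) hamem
  have h2 : oplus R b' c' ≤ b' + c' :=
    csSup_le ⟨a, hamem⟩ fun x hx => hx.2
  exact (ha'.2 ⟨hsA, h1⟩).trans h2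

/-- If `A ⊆ R` is finite and subadditive closed with `max A = max R`, and `(a,b,c)`
is a metric triple of elements of `R`, then `(ā, b̄, c̄)` is a metric triple, where
`x̄` is the least element of `A` with `x̄ ≥ x`. -/
theorem bar_metric_triple (R : Set ℝ) (hne : R.Nonempty) (hcl : IsClosed R)
    (hpos : ∀ x ∈ R, 0 ≤ x) (hbdd : BddAbove R) (h4 : FourValues R)
    (A : Set ℝ) (hA : A ⊆ R) (hAfin : A.Finite) (hAmax : sSup R ∈ A)
    (hAsub : IsSubadditiveClosed R A)
    (a b c : ℝ) (ha : a ∈ R) (hb : b ∈ R) (hc : c ∈ R)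
    (hm : IsMetricTriple a b c)
    (a' b' c' : ℝ)
    (ha' : IsLeast {t | t ∈ A ∧ a ≤ t} a')
    (hb' : IsLeast {t | t ∈ A ∧ b ≤ t} b')
    (hc' : IsLeast {t | t ∈ A ∧ c ≤ t} c') :
    IsMetricTriple a' b' c' := by
  exact ⟨oplus_key_s9 R hbdd A hAsub a b c a' b' c' ha ha' hb' hc' hm.1,
    oplus_key_s9 R hbdd A hAsub b a c b' a' c' hb hb' ha' hc' hm.2.1,
    oplus_key_s9 R hbdd A hAsub c a b c' a' b' hc hc' ha' hb' hm.2.2⟩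
end

section
/- Let R be a nonempty closed and bounded subset of the nonnegative reals satisfying the 4-values condition, and let A ⊆ R be finite and subadditive closed with max A = max R. Then A satisfies the 4-values condition. -/
/-- If `A ⊆ R` is finite and subadditive closed with `max A = max R`, then `A`
satisfies the 4-values condition. -/
theorem subadditive_closed_fourValues (R : Set ℝ) (hne : R.Nonempty)
    (hcl : IsClosed R) (hpos : ∀ x ∈ R, 0 ≤ x) (hbdd : BddAbove R)
    (h4 : FourValues R)
    (A : Set ℝ) (hA : A ⊆ R) (hAfin : A.Finite) (hAmax : sSup R ∈ A)
    (hAsub : IsSubadditiveClosed R A) :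
    FourValues A := by
  intro a ha b hb c hc d hd hmax hsum x hx hm1 hm2
  obtain ⟨y, hyR, hy1, hy2⟩ :=
    h4 a (hA ha) b (hA hb) c (hA hc) d (hA hd) hmax hsum x (hA hx) hm1 hm2
  set T : Set ℝ := {z | z ∈ A ∧ y ≤ z} with hT
  have hTfin : T.Finite := hAfin.subset fun z hz => hz.1
  have hTne : T.Nonempty := ⟨sSup R, hAmax, le_csSup hbdd hyR⟩
  have hymem : sInf T ∈ T := hTne.csInf_mem hTfin
  have hle : ∀ z ∈ A, y ≤ z → sInf T ≤ z := fun z hz hyz =>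
    csInf_le hTfin.bddBelow ⟨hz, hyz⟩
  have key : ∀ u ∈ A, ∀ v ∈ A, y ≤ u + v → sInf T ≤ u + v := by
    intro u hu v hv hyuv
    have hS : ({x | x ∈ R ∧ x ≤ u + v} : Set ℝ).Nonempty := ⟨y, hyR, hyuv⟩
    have hSb : BddAbove {x | x ∈ R ∧ x ≤ u + v} := hbdd.mono fun x hx => hx.1
    have h1 : y ≤ oplus R u v := le_csSup hSb ⟨hyR, hyuv⟩
    have h2 : oplus R u v ≤ u + v := csSup_le hS fun x hx => hx.2
    exact le_trans (hle _ (hAsub u hu v hv) h1) h2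
  obtain ⟨ha1, ha2, ha3⟩ := hy1
  obtain ⟨hb1, hb2, hb3⟩ := hy2
  have hyT := hymem.2
  exact ⟨sInf T, hymem.1,
    ⟨by linarith, by linarith, key a ha d hd ha3⟩,
    ⟨by linarith, by linarith, key c hc b hb hb3⟩⟩
end

section
/- A metric space M = (M; δ) is oscillation stable if and only if it is approximately indivisible. -/
/-- A metric space is oscillation stable if for every `ε > 0` and every uniformly
continuous bounded real-valued function `f` there is an isometric copy of the whole
space on which `f` oscillates less than `ε`. -/
def OscStable (M : Type) [MetricSpace M] : Prop :=
  ∀ ε > (0 : ℝ), ∀ f : M → ℝ, UniformContinuous f → (∃ C, ∀ x : M, |f x| ≤ C) →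
    ∃ φ : M → M, Isometry φ ∧
      sSup {d : ℝ | ∃ x y : M, d = |f (φ x) - f (φ y)|} < ε

/-- A metric space is approximately indivisible if for every `ε > 0`, `n ∈ ℕ` and
colouring `γ : M → Fin n` there are a colour `i` and an isometric copy of the whole
space inside the `ε`-neighbourhood of `γ⁻¹(i)`. -/
def ApproxIndivisible (M : Type) [MetricSpace M] : Prop :=
  ∀ ε > (0 : ℝ), ∀ (n : ℕ) (γ : M → Fin n),
    ∃ (i : Fin n) (φ : M → M), Isometry φ ∧
      ∀ x : M, ∃ y : M, γ y = i ∧ dist (φ x) y < ε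

lemma oscStable_to_approxIndivisible (M : Type) [MetricSpace M] [Nonempty M]
    (h : OscStable M) : ApproxIndivisible M := by
  intro ε hε n
  induction n with
  | zero => intro γ; exact (γ (Classical.arbitrary M)).elim0
  | succ n ih =>
    intro γ
    by_cases hall : ∀ x, γ x ≠ 0
    · obtain ⟨j, ψ, hψ, hy⟩ := ih (fun x => (γ x).pred (hall x))
      refine ⟨j.succ, ψ, hψ, fun x => ?_⟩
      obtain ⟨y, hyj, hyd⟩ := hy x
      exact ⟨y, by rw [← hyj, Fin.succ_pred], hyd⟩
    · push_neg at hall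
      obtain ⟨a, haA⟩ := hall
      set A : Set M := {x | γ x = 0} with hAdef
      have hA : A.Nonempty := ⟨a, haA⟩
      set f : M → ℝ := fun x => min (Metric.infDist x A) ε with hfdef
      have huc : UniformContinuous f :=
        ((Metric.lipschitz_infDist_pt A).min_const ε).uniformContinuous
      have hf0 : ∀ x, 0 ≤ f x := fun x =>
        le_min Metric.infDist_nonneg hε.le
      have hfε : ∀ x, f x ≤ ε := fun x => min_le_right _ _
      obtain ⟨φ, hφiso, hsup⟩ := h ε hε f huc
        ⟨ε, fun x => abs_le.2 ⟨by linarith [hf0 x], hfε x⟩⟩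
      set S : Set ℝ := {d : ℝ | ∃ x y : M, d = |f (φ x) - f (φ y)|} with hSdef
      have hbddS : BddAbove S := by
        refine ⟨ε, fun d hd => ?_⟩
        obtain ⟨x, y, rfl⟩ := hd
        exact abs_le.2 ⟨by linarith [hf0 (φ x), hfε (φ y)],
          by linarith [hf0 (φ y), hfε (φ x)]⟩
      have hle : ∀ x y, |f (φ x) - f (φ y)| < ε := fun x y =>
        lt_of_le_of_lt (le_csSup hbddS ⟨x, y, rfl⟩) hsup
      by_cases hcase : ∀ x, f (φ x) < ε
      · refine ⟨0, φ, hφiso, fun x => ?_⟩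
        have hlt : Metric.infDist (φ x) A < ε :=
          (min_lt_iff.1 (hcase x)).resolve_right (lt_irrefl ε)
        obtain ⟨y, hyA, hyd⟩ := (Metric.infDist_lt_iff hA).1 hlt
        exact ⟨y, hyA, hyd⟩
      · push_neg at hcase
        obtain ⟨x0, hx0⟩ := hcase
        have hpos : ∀ x, γ (φ x) ≠ 0 := by
          intro x hx
          have hfx : f (φ x) = 0 := by
            have : Metric.infDist (φ x) A = 0 :=
              Metric.infDist_zero_of_mem (by exact hx)
            simp [hfdef, this, hε.le]
          have h1 := hle x x0
          rw [hfx, zero_sub, abs_neg, abs_of_nonneg (hf0 (φ x0))] at h1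
          linarith
        obtain ⟨j, ψ, hψ, hy⟩ := ih (fun x => (γ (φ x)).pred (hpos x))
        refine ⟨j.succ, φ ∘ ψ, hφiso.comp hψ, fun x => ?_⟩
        obtain ⟨y, hyj, hyd⟩ := hy x
        refine ⟨φ y, by rw [← hyj, Fin.succ_pred], ?_⟩
        rw [Function.comp_apply, hφiso.dist_eq]
        exact hyd

lemma approxIndivisible_to_oscStable (M : Type) [MetricSpace M] [Nonempty M]
    (h : ApproxIndivisible M) : OscStable M := by
  intro ε hε f huc hbd
  obtain ⟨C, hC⟩ := hbd
  set η : ℝ := ε / 4 with hηdef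
  have hη : 0 < η := by positivity
  obtain ⟨δ, hδ, hδf⟩ := Metric.uniformContinuous_iff.1 huc η hη
  set n : ℕ := ⌊2 * C / η⌋₊ + 1 with hndef
  have hnonneg : ∀ x, 0 ≤ (f x + C) / η := fun x =>
    div_nonneg (by linarith [(abs_le.1 (hC x)).1]) hη.le
  have hltn : ∀ x : M, ⌊(f x + C) / η⌋₊ < n := by
    intro x
    have h1 : (f x + C) / η ≤ 2 * C / η := by
      gcongr
      linarith [(abs_le.1 (hC x)).2]
    exact Nat.lt_succ_of_le (Nat.floor_le_floor h1)
  set γ : M → Fin n := fun x => ⟨⌊(f x + C) / η⌋₊, hltn x⟩ with hγdef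
  have hkey : ∀ y z : M, γ y = γ z → |f y - f z| < η := by
    intro y z hyz
    have heq : (⌊(f y + C) / η⌋₊ : ℝ) = (⌊(f z + C) / η⌋₊ : ℝ) := by
      have := congrArg Fin.val hyz
      simp only [hγdef] at this
      exact_mod_cast this
    have h1 : (⌊(f y + C) / η⌋₊ : ℝ) ≤ (f y + C) / η := Nat.floor_le (hnonneg y)
    have h2 : (f y + C) / η < ⌊(f y + C) / η⌋₊ + 1 := Nat.lt_floor_add_one _
    have h3 : (⌊(f z + C) / η⌋₊ : ℝ) ≤ (f z + C) / η := Nat.floor_le (hnonneg z)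
    have h4 : (f z + C) / η < ⌊(f z + C) / η⌋₊ + 1 := Nat.lt_floor_add_one _
    have h5 : (f y + C) / η - (f z + C) / η < 1 := by linarith
    have h6 : (f z + C) / η - (f y + C) / η < 1 := by linarith
    have h7 : f y - f z < η := by
      have h5' : (f y + C - (f z + C)) / η < 1 := by rw [sub_div]; linarith
      have := (div_lt_one hη).1 h5'
      linarith
    have h8 : f z - f y < η := by
      have h6' : (f z + C - (f y + C)) / η < 1 := by rw [sub_div]; linarith
      have := (div_lt_one hη).1 h6'
      linarith
    exact abs_sub_lt_iff.2 ⟨h7, h8⟩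
  obtain ⟨i, φ, hiso, hnear⟩ := h δ hδ n γ
  refine ⟨φ, hiso, ?_⟩
  have hboundS : ∀ d ∈ {d : ℝ | ∃ x y : M, d = |f (φ x) - f (φ y)|}, d ≤ 3 * η := by
    rintro d ⟨x, y, rfl⟩
    obtain ⟨yx, hyxγ, hyxd⟩ := hnear x
    obtain ⟨yy, hyyγ, hyyd⟩ := hnear y
    have e1 : |f (φ x) - f yx| < η := by
      have := hδf hyxd
      rwa [Real.dist_eq] at this
    have e2 : |f yx - f yy| < η := hkey yx yy (hyxγ.trans hyyγ.symm)
    have e3 : |f yy - f (φ y)| < η := by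
      have := hδf hyyd
      rw [Real.dist_eq] at this
      rw [abs_sub_comm]
      exact this
    have t1 := abs_sub_le (f (φ x)) (f yx) (f yy)
    have t2 := abs_sub_le (f (φ x)) (f yy) (f (φ y))
    linarith
  have hSne : {d : ℝ | ∃ x y : M, d = |f (φ x) - f (φ y)|}.Nonempty := by
    obtain ⟨x⟩ := (inferInstance : Nonempty M)
    exact ⟨|f (φ x) - f (φ x)|, x, x, rfl⟩
  have := csSup_le hSne hboundS
  have h34 : 3 * η < ε := by rw [hηdef]; linarith
  linarith

/-- A (nonempty) metric space is oscillation stable iff it is approximately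
indivisible. -/
theorem oscStable_iff_approxIndivisible (M : Type) [MetricSpace M] [Nonempty M] :
    OscStable M ↔ ApproxIndivisible M :=
  ⟨oscStable_to_approxIndivisible M, approxIndivisible_to_oscStable M⟩
end

section
/- If a metric space M = (M; δ) is approximately indivisible, then M is oscillation stable. -/
/-- If a metric space is approximately indivisible then it is oscillation stable. -/
theorem approxIndivisible_oscStable (M : Type) [MetricSpace M]
    (h : ApproxIndivisible M) : OscStable M := by
  intro ε hε f hf ⟨C, hC⟩
  set C₀ : ℝ := max C 0 with hC₀def
  have hC₀ : ∀ x, |f x| ≤ C₀ := fun x => (hC x).trans (le_max_left _ _)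
  have hC₀0 : (0:ℝ) ≤ C₀ := le_max_right _ _
  set c : ℝ := ε / 8 with hcdef
  have hc : 0 < c := by positivity
  -- uniform continuity modulus
  obtain ⟨δ₀, hδ₀, hmod⟩ := Metric.uniformContinuous_iff.1 hf c hc
  -- the colouring
  set n : ℕ := ⌈2 * C₀ / c⌉₊ + 1 with hn
  have hkey : ∀ x : M, ⌊(f x + C₀) / c⌋₊ < n := by
    intro x
    have h1 : (f x + C₀) / c ≤ 2 * C₀ / c := by
      have h2 := (abs_le.1 (hC₀ x)).2
      gcongr
      linarith
    calc ⌊(f x + C₀) / c⌋₊ ≤ ⌊2 * C₀ / c⌋₊ := Nat.floor_le_floor h1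
      _ ≤ ⌈2 * C₀ / c⌉₊ := Nat.floor_le_ceil _
      _ < n := Nat.lt_succ_self _
  set γ : M → Fin n := fun x => ⟨⌊(f x + C₀) / c⌋₊, hkey x⟩ with hγ
  obtain ⟨i, φ, hiso, hφ⟩ := h δ₀ hδ₀ n γ
  refine ⟨φ, hiso, ?_⟩
  have hbound : ∀ d ∈ {d : ℝ | ∃ x y : M, d = |f (φ x) - f (φ y)|}, d ≤ ε / 2 := by
    rintro d ⟨x, y, rfl⟩
    obtain ⟨a, hai, ha⟩ := hφ x
    obtain ⟨b, hbi, hb⟩ := hφ y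
    have h1 : |f (φ x) - f a| < c := by
      have := hmod ha; rwa [Real.dist_eq] at this
    have h2 : |f (φ y) - f b| < c := by
      have := hmod hb; rwa [Real.dist_eq] at this
    -- same colour implies values within c
    have h3 : |f a - f b| < c := by
      have hk : ⌊(f a + C₀) / c⌋₊ = ⌊(f b + C₀) / c⌋₊ := by
        have := hai.trans hbi.symm
        simpa [hγ, Fin.ext_iff] using this
      set k := ⌊(f a + C₀) / c⌋₊ with hkdef
      have hna : (0:ℝ) ≤ (f a + C₀) / c :=
        div_nonneg (by linarith [(abs_le.1 (hC₀ a)).1]) hc.le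
      have hnb : (0:ℝ) ≤ (f b + C₀) / c :=
        div_nonneg (by linarith [(abs_le.1 (hC₀ b)).1]) hc.le
      have la : (k:ℝ) ≤ (f a + C₀) / c := Nat.floor_le hna
      have ua : (f a + C₀) / c < k + 1 := Nat.lt_floor_add_one _
      have lb : (k:ℝ) ≤ (f b + C₀) / c := hk ▸ Nat.floor_le hnb
      have ub : (f b + C₀) / c < k + 1 := by
        rw [hk]; exact Nat.lt_floor_add_one _
      have la' : (k:ℝ) * c ≤ f a + C₀ := (le_div_iff₀ hc).1 la
      have ua' : f a + C₀ < ((k:ℝ) + 1) * c := (div_lt_iff₀ hc).1 ua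
      have lb' : (k:ℝ) * c ≤ f b + C₀ := (le_div_iff₀ hc).1 lb
      have ub' : f b + C₀ < ((k:ℝ) + 1) * c := (div_lt_iff₀ hc).1 ub
      rw [abs_lt]; constructor <;> nlinarith
    calc |f (φ x) - f (φ y)| ≤ |f (φ x) - f a| + |f a - f b| + |f b - f (φ y)| := by
          have := abs_sub_le (f (φ x)) (f a) (f (φ y))
          have := abs_sub_le (f a) (f b) (f (φ y))
          have h2' : |f b - f (φ y)| = |f (φ y) - f b| := abs_sub_comm _ _
          linarith [abs_sub_le (f (φ x)) (f a) (f (φ y)), abs_sub_le (f a) (f b) (f (φ y))]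
      _ ≤ ε / 2 := by
          rw [abs_sub_comm (f b)] at *
          simp only [hcdef] at h1 h2 h3
          linarith
  have := Real.sSup_le hbound (by linarith)
  linarith
end
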